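/- arXiv:2004.14509 — 5 statements merged into one kernel-verified Lean document; each statement's English description precedes it below -/
import Mathlib

section
/- For pairwise distinct elements d_0, d_1, ..., d_{n-1} of a set A and indices 0 ≤ u < v ≤ n-1, the equivalence relation on A identifying exactly d_u and d_v equals the meet of the join of the atoms equ(d_u,d_{u+1}), equ(d_{u+1},d_{u+2}), ..., equ(d_{v-1},d_v) with the join of the atoms equ(d_v,d_{v+1}), ..., equ(d_{n-2},d_{n-1}), equ(d_{n-1},d_0), equ(d_0,d_1), ..., equ(d_{u-1},d_u) in the lattice Equ(A) of equivalence relations on A ordered by inclusion. -/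
/-- The equivalence relation on `A` whose only non-singleton block is `{a, b}`. -/
def equ {A : Type*} (a b : A) : Setoid A :=
  Relation.EqvGen.setoid (fun x y => x = a ∧ y = b)

/-- A subset `G` of a lattice generates it if the smallest sublattice containing `G`
(the lattice closure of `G`) is everything. -/
def Generates {L : Type*} [Lattice L] (G : Set L) : Prop :=
  latticeClosure G = Set.univ

section Aux

variable {A : Type*}

/-- The equivalence relation whose only possibly-non-singleton block is `S`. -/
private def blk (S : Set A) : Setoid A where
  r x y := x = y ∨ (x ∈ S ∧ y ∈ S)
  iseqv := by
    refine ⟨fun x => Or.inl rfl, ?_, ?_⟩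
    · rintro x y (rfl | ⟨h1, h2⟩)
      · exact Or.inl rfl
      · exact Or.inr ⟨h2, h1⟩
    · rintro x y z (rfl | ⟨h1, h2⟩) (rfl | ⟨h3, h4⟩) <;> tauto

private lemma blk_rel {S : Set A} {x y : A} : blk S x y ↔ x = y ∨ (x ∈ S ∧ y ∈ S) := Iff.rfl

private lemma equ_rel_pair (a b : A) : equ a b a b :=
  Relation.EqvGen.rel a b ⟨rfl, rfl⟩

private lemma equ_le {a b : A} {s : Setoid A} (h : s a b) : equ a b ≤ s :=
  Setoid.eqvGen_le (fun x y hxy => hxy.1 ▸ hxy.2 ▸ h)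

private lemma equ_eq_blk (a b : A) : equ a b = blk {a, b} := by
  apply le_antisymm
  · exact equ_le (Or.inr ⟨by simp, by simp⟩)
  · rw [Setoid.le_def]
    rintro x y (rfl | ⟨hx, hy⟩)
    · exact (equ a b).refl x
    simp only [Set.mem_insert_iff, Set.mem_singleton_iff] at hx hy
    rcases hx with rfl | rfl <;> rcases hy with rfl | rfl
    · exact (equ _ _).refl _
    · exact equ_rel_pair _ _
    · exact (equ _ _).symm (equ_rel_pair _ _)
    · exact (equ _ _).refl _

private lemma blk_inf (S T : Set A) : blk S ⊓ blk T = blk (S ∩ T) := by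
  apply Setoid.ext
  intro x y
  show (blk S x y ∧ blk T x y) ↔ blk (S ∩ T) x y
  simp only [blk_rel, Set.mem_inter_iff]
  tauto

/-- Chain lemma: if consecutive elements are related, the endpoints are related. -/
private lemma chain {n : ℕ} (d : Fin n → A) (R : Setoid A) (a : ℕ) :
    ∀ b (hab : a ≤ b) (hb : b < n),
    (∀ m (h1 : a ≤ m) (h2 : m + 1 ≤ b), R (d ⟨m, by omega⟩) (d ⟨m + 1, by omega⟩)) →
    R (d ⟨a, by omega⟩) (d ⟨b, hb⟩) := by
  intro b hab
  induction b, hab using Nat.le_induction with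
  | base => intro hb _; exact R.refl _
  | succ b hab IH =>
    intro hb hstep
    exact R.trans (IH (by omega) (fun m h1 h2 => hstep m h1 (by omega)))
      (hstep b hab le_rfl)

private lemma fin_add_one {n : ℕ} [NeZero n] (i : Fin n) (h : i.1 + 1 < n) :
    i + 1 = ⟨i.1 + 1, h⟩ := by
  apply Fin.ext
  simp [Fin.add_def, Fin.val_one', Nat.mod_eq_of_lt (show 1 < n by omega),
    Nat.mod_eq_of_lt h]

private lemma fin_last_add_one {n : ℕ} [NeZero n] (hn : 2 ≤ n) (i : Fin n)
    (h : i.1 = n - 1) : i + 1 = 0 := by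
  apply Fin.ext
  rw [Fin.add_def]
  simp [Fin.val_one', h, Nat.mod_eq_of_lt (show 1 < n by omega),
    Nat.sub_add_cancel (show 1 ≤ n by omega)]

end Aux

/-- Circle Principle. -/
theorem circle_principle {A : Type*} {n : ℕ} [NeZero n]
    (d : Fin n → A) (hd : Function.Injective d) (u v : Fin n) (huv : u < v) :
    equ (d u) (d v) =
      (⨆ i ∈ Finset.Ico u v, equ (d i) (d (i + 1))) ⊓
      (⨆ i ∈ (Finset.Ico u v)ᶜ, equ (d i) (d (i + 1))) := by
  have hn2 : 2 ≤ n := by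
    have h1 := v.2
    have h2 : u.1 < v.1 := huv
    omega
  set P := ⨆ i ∈ Finset.Ico u v, equ (d i) (d (i + 1)) with hPdef
  set Q := ⨆ i ∈ (Finset.Ico u v)ᶜ, equ (d i) (d (i + 1)) with hQdef
  set S : Set A := d '' Set.Icc u v with hSdef
  set T : Set A := d '' (Set.Iic u ∪ Set.Ici v) with hTdef
  -- generators of P relate consecutive elements
  have hPstep : ∀ m (h1 : u.1 ≤ m) (h2 : m + 1 ≤ v.1),
      P (d ⟨m, by omega⟩) (d ⟨m + 1, by omega⟩) := by
    intro m h1 h2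
    have hmn : m < n := by have := v.2; omega
    set i : Fin n := ⟨m, hmn⟩ with hidef
    have hi : i ∈ Finset.Ico u v := by
      rw [Finset.mem_Ico]
      exact ⟨Fin.le_def.mpr h1, Fin.lt_def.mpr (show m < v.1 by omega)⟩
    have hle : equ (d i) (d (i + 1)) ≤ P := le_iSup₂ (f := fun i _ => equ (d i) (d (i + 1))) i hi
    have := Setoid.le_def.mp hle (equ_rel_pair (d i) (d (i + 1)))
    rwa [fin_add_one i (show m + 1 < n by have := v.2; omega)] at this
  -- P relates d u to every d j with u ≤ j ≤ v
  have hPreach : ∀ j : Fin n, u ≤ j → j ≤ v → P (d u) (d j) := by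
    intro j h1 h2
    have := chain d P u.1 j.1 h1 j.2
      (fun m hm1 hm2 => hPstep m hm1 (by have : j.1 ≤ v.1 := h2; omega))
    simpa using this
  have hP : P = blk S := by
    apply le_antisymm
    · apply iSup₂_le
      intro i hi
      rw [Finset.mem_Ico] at hi
      apply equ_le
      refine Or.inr ⟨⟨i, ⟨hi.1, le_of_lt hi.2⟩, rfl⟩, ?_⟩
      have hlt : i.1 + 1 < n := by
        have h2 : i.1 < v.1 := hi.2
        have := v.2; omega
      refine ⟨i + 1, ⟨?_, ?_⟩, rfl⟩ <;> rw [fin_add_one i hlt]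
      · have h1 : u.1 ≤ i.1 := hi.1
        exact Fin.le_def.mpr (by simp; omega)
      · have h2 : i.1 < v.1 := hi.2
        exact Fin.le_def.mpr (by simp; omega)
    · rw [Setoid.le_def]
      rintro x y (rfl | ⟨⟨j, hj, rfl⟩, ⟨k, hk, rfl⟩⟩)
      · exact P.refl x
      · exact P.trans (P.symm (hPreach j hj.1 hj.2)) (hPreach k hk.1 hk.2)
  -- generators of Q
  have hQgen : ∀ i : Fin n, (i < u ∨ v ≤ i) → Q (d i) (d (i + 1)) := by
    intro i hi
    have hmem : i ∈ (Finset.Ico u v)ᶜ := by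
      simp only [Finset.mem_compl, Finset.mem_Ico, not_and, not_lt]
      intro hu
      rcases hi with h | h
      · exact absurd hu (not_le.mpr h)
      · exact h
    have hle : equ (d i) (d (i + 1)) ≤ Q :=
      le_iSup₂ (f := fun i _ => equ (d i) (d (i + 1))) i hmem
    exact Setoid.le_def.mp hle (equ_rel_pair (d i) (d (i + 1)))
  -- Q relates d v to every d j with v ≤ j
  have hQup : ∀ j : Fin n, v ≤ j → Q (d v) (d j) := by
    intro j h
    have := chain d Q v.1 j.1 h j.2 (fun m hm1 hm2 => by
      have hmn : m < n := by have := j.2; omega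
      have : Q (d ⟨m, hmn⟩) (d (⟨m, hmn⟩ + 1)) :=
        hQgen ⟨m, hmn⟩ (Or.inr (Fin.le_def.mpr hm1))
      rwa [fin_add_one ⟨m, hmn⟩ (show m + 1 < n by have := j.2; omega)] at this)
    simpa using this
  -- Q relates d v to d 0
  have hQwrap : Q (d v) (d 0) := by
    have hlast : n - 1 < n := by omega
    have h1 : Q (d v) (d ⟨n - 1, hlast⟩) :=
      hQup ⟨n - 1, hlast⟩ (Fin.le_def.mpr (by have := v.2; simp; omega))
    have h2 : Q (d ⟨n - 1, hlast⟩) (d (⟨n - 1, hlast⟩ + 1)) :=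
      hQgen ⟨n - 1, hlast⟩ (Or.inr (Fin.le_def.mpr (by have := v.2; simp; omega)))
    rw [fin_last_add_one hn2 ⟨n - 1, hlast⟩ rfl] at h2
    exact Q.trans h1 h2
  -- Q relates d 0 to every d j with j ≤ u
  have hQdown : ∀ j : Fin n, j ≤ u → Q (d 0) (d j) := by
    intro j h
    have := chain d Q 0 j.1 (Nat.zero_le _) j.2 (fun m hm1 hm2 => by
      have hmn : m < n := by have := j.2; omega
      have hmu : m < u.1 := by
        have : j.1 ≤ u.1 := h
        omega
      have : Q (d ⟨m, hmn⟩) (d (⟨m, hmn⟩ + 1)) :=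
        hQgen ⟨m, hmn⟩ (Or.inl (Fin.lt_def.mpr hmu))
      rwa [fin_add_one ⟨m, hmn⟩ (show m + 1 < n by have := u.2; omega)] at this)
    have h0 : (⟨0, by omega⟩ : Fin n) = 0 := rfl
    rw [h0] at this
    simpa using this
  have hQreach : ∀ j : Fin n, j ∈ Set.Iic u ∪ Set.Ici v → Q (d v) (d j) := by
    rintro j (hj | hj)
    · exact Q.trans hQwrap (hQdown j hj)
    · exact hQup j hj
  have hQ : Q = blk T := by
    apply le_antisymm
    · apply iSup₂_le
      intro i hi
      simp only [Finset.mem_compl, Finset.mem_Ico, not_and, not_lt] at hi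
      apply equ_le
      by_cases hiu : i < u
      · refine Or.inr ⟨⟨i, Or.inl (le_of_lt hiu), rfl⟩, ?_⟩
        have hlt : i.1 + 1 < n := by
          have h1 : i.1 < u.1 := hiu
          have := u.2; omega
        refine ⟨i + 1, Or.inl ?_, rfl⟩
        rw [fin_add_one i hlt]
        have h1 : i.1 < u.1 := hiu
        exact Fin.le_def.mpr (by simp; omega)
      · have hvi : v ≤ i := hi (not_lt.mp hiu)
        refine Or.inr ⟨⟨i, Or.inr hvi, rfl⟩, ?_⟩
        by_cases hlast : i.1 = n - 1
        · refine ⟨i + 1, Or.inl ?_, rfl⟩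
          rw [fin_last_add_one hn2 i hlast]
          exact Fin.zero_le u
        · have hlt : i.1 + 1 < n := by have := i.2; omega
          refine ⟨i + 1, Or.inr ?_, rfl⟩
          rw [fin_add_one i hlt]
          have h1 : v.1 ≤ i.1 := hvi
          exact Fin.le_def.mpr (by simp; omega)
    · rw [Setoid.le_def]
      rintro x y (rfl | ⟨⟨j, hj, rfl⟩, ⟨k, hk, rfl⟩⟩)
      · exact Q.refl x
      · exact Q.trans (Q.symm (hQreach j hj)) (hQreach k hk)
  have hST : S ∩ T = {d u, d v} := by
    ext x
    constructor
    · rintro ⟨⟨j, hj, rfl⟩, ⟨k, hk, hkj⟩⟩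
      have hjk : k = j := hd hkj
      subst hjk
      rcases hk with hk | hk
      · exact Or.inl (congrArg d (le_antisymm hk hj.1))
      · exact Or.inr (congrArg d (le_antisymm hj.2 hk))
    · rintro (rfl | rfl)
      · exact ⟨⟨u, ⟨le_refl u, le_of_lt huv⟩, rfl⟩, ⟨u, Or.inl (le_refl u), rfl⟩⟩
      · exact ⟨⟨v, ⟨le_of_lt huv, le_refl v⟩, rfl⟩, ⟨v, Or.inr (le_refl v), rfl⟩⟩
  rw [hP, hQ, blk_inf, hST, equ_eq_blk]
end

section
/- If L is a semimodular lattice of finite length, then for all x, y ∈ L the graph-theoretic distance between x and y in the covering (Hasse) graph of L equals length([x, x∨y]) + length([y, x∨y]). -/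
/-!
Fix `y` and consider the potential `φ u = length [u, u ⊔ y] + length [y, u ⊔ y]`. It vanishes at
`y`, changes by exactly one along every covering edge, and every `u ≠ y` has a neighbour where it
drops (go up inside `[u, u ⊔ y]` if `u < u ⊔ y`, otherwise down inside `[y, u]`); hence `φ` is the
graph distance to `y`. The exact change along an edge rests on the Jordan–Dedekind property
`length [a, b] = length [x, b] + 1` for `a ⋖ x ≤ b`, which is where semimodularity enters.
-/

open Set

section Paths

variable {V : Type*} (r : V → V → Prop)

def pathLengths (x y : V) : Set ℕ :=
  {k | ∃ f : ℕ → V, f 0 = x ∧ f k = y ∧ ∀ i < k, r (f i) (f (i + 1))}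

variable {r} {φ : V → ℕ∞} {x y : V}

theorem le_of_mem_pathLengths (hy : φ y = 0) (hlip : ∀ u v, r u v → φ u ≤ φ v + 1) {k : ℕ}
    (hk : k ∈ pathLengths r x y) : φ x ≤ k := by
  induction k generalizing x with
  | zero =>
    obtain ⟨f, rfl, hf, -⟩ := hk
    simp [hf, hy]
  | succ k ih =>
    obtain ⟨f, rfl, hfk, hf⟩ := hk
    calc φ (f 0) ≤ φ (f 1) + 1 := hlip _ _ (hf 0 k.succ_pos)
      _ ≤ k + 1 := by
        gcongr
        exact ih ⟨fun i => f (i + 1), rfl, hfk, fun i hi => hf (i + 1) (by omega)⟩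
      _ = (k + 1 : ℕ) := by push_cast; rfl

theorem mem_pathLengths_of_potential (hy : φ y = 0)
    (hdesc : ∀ u ≠ y, ∃ v, r u v ∧ φ v + 1 = φ u) (n : ℕ) (hx : φ x = n) :
    n ∈ pathLengths r x y := by
  induction n generalizing x with
  | zero =>
    obtain rfl : x = y := by
      by_contra hxy
      obtain ⟨v, -, hv⟩ := hdesc x hxy
      simp [hx] at hv
    exact ⟨fun _ => x, rfl, rfl, by simp⟩
  | succ n ih =>
    obtain ⟨v, hxv, hv⟩ := hdesc x (by rintro rfl; exact absurd (hx.symm.trans hy) (by simp))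
    rw [hx, Nat.cast_succ] at hv
    replace hv : φ v = n := ENat.add_left_injective_of_ne_top ENat.one_ne_top hv
    obtain ⟨f, hf0, hfn, hf⟩ := ih hv
    refine ⟨fun i => if i = 0 then x else f (i - 1), rfl, by simpa using hfn, fun i hi => ?_⟩
    rcases i with _ | i
    · simpa [hf0] using hxv
    · simpa using hf i (by omega)

theorem sInf_pathLengths_eq (hy : φ y = 0) (hlip : ∀ u v, r u v → φ u ≤ φ v + 1)
    (hdesc : ∀ u ≠ y, ∃ v, r u v ∧ φ v + 1 = φ u) (hx : φ x ≠ ⊤) :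
    ((sInf (pathLengths r x y) : ℕ) : ℕ∞) = φ x := by
  obtain ⟨n, hn⟩ := ENat.ne_top_iff_exists.1 hx
  have hmem := mem_pathLengths_of_potential hy hdesc n hn.symm
  rw [← hn, Nat.cast_inj]
  refine le_antisymm (Nat.sInf_le hmem) (le_csInf ⟨n, hmem⟩ fun k hk => ?_)
  exact_mod_cast hn ▸ le_of_mem_pathLengths hy hlip hk

end Paths

theorem wellFounded_of_chainHeight_univ_ne_top {α : Type*} {r : α → α → Prop} [IsStrictOrder α r]
    (h : (univ : Set α).chainHeight r ≠ ⊤) : WellFounded r := by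
  refine RelEmbedding.wellFounded_iff_isEmpty.2 ⟨fun f => h (top_le_iff.1 ?_)⟩
  have hchain : IsChain r (range f) := by
    rintro _ ⟨i, rfl⟩ _ ⟨j, rfl⟩ hij
    rcases lt_or_gt_of_ne (ne_of_apply_ne f hij) with h | h
    · exact Or.inr (f.map_rel_iff.2 h)
    · exact Or.inl (f.map_rel_iff.2 h)
  calc ⊤ = (range f).encard := (infinite_range_of_injective f.injective).encard_eq.symm
    _ ≤ _ := encard_le_chainHeight_of_isChain _ _ (subset_univ _) hchain

theorem chainHeight_add_one_le_chainHeight_insert {α : Type*} [Preorder α] {s : Set α} {a : α}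
    (ha : ∀ z ∈ s, a < z ∨ z < a) :
    s.chainHeight (· < ·) + 1 ≤ (insert a s).chainHeight (· < ·) := by
  have : Nonempty {t // t ⊆ s ∧ IsChain (· < ·) t} := ⟨⟨∅, empty_subset s, IsChain.empty⟩⟩
  rw [chainHeight_eq_iSup, ENat.iSup_add]
  refine iSup_le fun ⟨t, hts, ht⟩ => ?_
  have hat : a ∉ t := fun h => (ha a (hts h)).elim (lt_irrefl a) (lt_irrefl a)
  rw [← encard_insert_of_notMem hat]
  exact encard_le_chainHeight_of_isChain _ _ (insert_subset_insert hts)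
    (ht.insert fun b hb _ => ha b (hts hb))

theorem chainHeight_singleton {α : Type*} [Preorder α] (a : α) :
    ({a} : Set α).chainHeight (· < ·) = 1 := by
  rw [← encard_eq_chainHeight_of_isChain _ subsingleton_singleton.isChain, encard_singleton]

section Lattice

variable {L : Type*} [Lattice L] {a b c u v w x y : L}

/-- `length [a, b]`: `chainHeight` counts the elements of a chain, not its steps. -/
noncomputable def intervalLength (a b : L) : ℕ∞ := (Icc a b).chainHeight (· < ·) - 1

@[simp]
theorem intervalLength_self (a : L) : intervalLength a a = 0 := by
  simp [intervalLength, chainHeight_singleton]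

theorem chainHeight_Icc_eq_intervalLength_add_one (hab : a ≤ b) :
    (Icc a b).chainHeight (· < ·) = intervalLength a b + 1 :=
  (tsub_add_cancel_of_le ((one_le_chainHeight_iff _ _).2 (nonempty_Icc.2 hab))).symm

theorem intervalLength_ne_top (h : (univ : Set L).chainHeight (· < ·) ≠ ⊤) (a b : L) :
    intervalLength a b ≠ ⊤ :=
  ne_top_of_le_ne_top h (tsub_le_self.trans (chainHeight_mono _ _ _ (subset_univ _)))

noncomputable def joinLength (u y : L) : ℕ∞ := intervalLength u (u ⊔ y) + intervalLength y (u ⊔ y)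

@[simp]
theorem joinLength_self (y : L) : joinLength y y = 0 := by
  simp [joinLength]

theorem joinLength_ne_top (h : (univ : Set L).chainHeight (· < ·) ≠ ⊤) (u y : L) :
    joinLength u y ≠ ⊤ := by
  simp [joinLength, intervalLength_ne_top h]

variable [IsUpperModularLattice L]

theorem covBy_sup_of_covBy_of_not_le (hax : a ⋖ x) (hac : a ≤ c) (hxc : ¬ x ≤ c) :
    c ⋖ c ⊔ x := by
  have hinf : x ⊓ c = a := by
    rcases hax.eq_or_eq (le_inf hax.le hac) inf_le_left with h | h
    · exact h
    · exact absurd (h ▸ inf_le_right) hxc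
  rw [sup_comm]
  exact covBy_sup_of_inf_covBy_left (hinf ▸ hax)

/-- Joining with `x` maps a chain of `[a, b]` into `[x, b]`. Since `c ⋖ c ⊔ x` whenever `x ≰ c`,
two elements `c < d` are identified only if `d = c ⊔ x`, which happens for at most one `c`. -/
theorem encard_le_chainHeight_Icc_add_one (hax : a ⋖ x) (hxb : x ≤ b) {t : Set L}
    (hts : t ⊆ Icc a b) (ht : IsChain (· < ·) t) :
    t.encard ≤ (Icc x b).chainHeight (· < ·) + 1 := by
  set B := {c ∈ t | ¬ x ≤ c ∧ c ⊔ x ∈ t}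
  have hcov : ∀ c ∈ t, ¬ x ≤ c → c ⋖ c ⊔ x := fun c hc hxc =>
    covBy_sup_of_covBy_of_not_le hax (hts hc).1 hxc
  have hcollide : ∀ c ∈ t, ∀ d ∈ t, c < d → c ⊔ x = d ⊔ x → c ∈ B := by
    intro c hc d hd hcd heq
    have hxc : ¬ x ≤ c := fun hxc => (sup_eq_left.2 hxc ▸ heq ▸ le_sup_left : d ≤ c).not_gt hcd
    refine ⟨hc, hxc, ?_⟩
    rcases (hcov c hc hxc).eq_or_eq hcd.le (heq ▸ le_sup_left) with h | h
    · exact absurd h hcd.ne'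
    · exact h ▸ hd
  have hB : B.Subsingleton := by
    rintro c ⟨hc, hxc, hcx⟩ d ⟨hd, hxd, hdx⟩
    by_contra hne
    wlog hcd : c < d generalizing c d
    · exact this hd hxd hdx hc hxc hcx (Ne.symm hne) ((ht hc hd hne).resolve_left hcd)
    rcases ht hcx hd (fun h => hxd (h ▸ le_sup_right)) with h | h
    · exact hxd (le_sup_right.trans h.le)
    · exact (hcov c hc hxc).2 hcd h
  have hinj : InjOn (· ⊔ x) (t \ B) := by
    rintro c ⟨hc, hcB⟩ d ⟨hd, hdB⟩ heq
    by_contra hne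
    rcases ht hc hd hne with h | h
    · exact hcB (hcollide c hc d hd h heq)
    · exact hdB (hcollide d hd c hc h heq.symm)
  have hchain : IsChain (· < ·) ((· ⊔ x) '' (t \ B)) := by
    rintro _ ⟨c, hc, rfl⟩ _ ⟨d, hd, rfl⟩ hne
    rcases ht hc.1 hd.1 (ne_of_apply_ne (· ⊔ x) hne) with h | h
    · exact Or.inl ((sup_le_sup_right h.le x).lt_of_ne hne)
    · exact Or.inr ((sup_le_sup_right h.le x).lt_of_ne hne.symm)
  have himage : (· ⊔ x) '' (t \ B) ⊆ Icc x b := by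
    rintro _ ⟨c, hc, rfl⟩
    exact ⟨le_sup_right, sup_le (hts hc.1).2 hxb⟩
  calc t.encard = (t \ B).encard + B.encard :=
        (encard_sdiff_add_encard_of_subset fun _ h => h.1).symm
    _ = ((· ⊔ x) '' (t \ B)).encard + B.encard := by rw [hinj.encard_image]
    _ ≤ (Icc x b).chainHeight (· < ·) + 1 :=
      add_le_add (encard_le_chainHeight_of_isChain _ _ himage hchain)
        (encard_le_one_iff_subsingleton.2 hB)

theorem chainHeight_Icc_eq_of_covBy (hax : a ⋖ x) (hxb : x ≤ b) :
    (Icc a b).chainHeight (· < ·) = (Icc x b).chainHeight (· < ·) + 1 := by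
  refine le_antisymm ?_ ?_
  · rw [chainHeight_eq_iSup]
    exact iSup_le fun t => encard_le_chainHeight_Icc_add_one hax hxb t.2.1 t.2.2
  · refine (chainHeight_add_one_le_chainHeight_insert (a := a) fun z hz => ?_).trans
      (chainHeight_mono _ _ _ ?_)
    · exact Or.inl (hax.lt.trans_le hz.1)
    · exact insert_subset ⟨le_rfl, hax.le.trans hxb⟩ fun z hz => ⟨hax.le.trans hz.1, hz.2⟩

theorem intervalLength_eq_of_covBy (hax : a ⋖ x) (hxb : x ≤ b) :
    intervalLength a b = intervalLength x b + 1 := by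
  rw [intervalLength, chainHeight_Icc_eq_of_covBy hax hxb,
    chainHeight_Icc_eq_intervalLength_add_one hxb,
    (ENat.addLECancellable_of_ne_top ENat.one_ne_top).add_tsub_cancel_right]

theorem intervalLength_eq_of_covBy_right [IsStronglyAtomic L] [WellFoundedGT L]
    (haw : a ≤ w) (hwb : w ⋖ b) : intervalLength a b = intervalLength a w + 1 := by
  induction a using WellFoundedGT.induction with
  | _ a ih =>
  rcases haw.eq_or_lt with rfl | hlt
  · rw [intervalLength_eq_of_covBy hwb le_rfl, intervalLength_self, intervalLength_self]
  · obtain ⟨x, hax, hxw⟩ := exists_covBy_le_of_lt hlt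
    rw [intervalLength_eq_of_covBy hax (hxw.trans hwb.le), intervalLength_eq_of_covBy hax hxw,
      ih x hax.lt hxw]

theorem joinLength_eq_of_covBy_of_le (huv : u ⋖ v) (hv : v ≤ u ⊔ y) :
    joinLength u y = joinLength v y + 1 := by
  have hsup : v ⊔ y = u ⊔ y := le_antisymm (sup_le hv le_sup_right) (sup_le_sup_right huv.le y)
  rw [joinLength, joinLength, hsup, intervalLength_eq_of_covBy huv hv, add_right_comm]

theorem joinLength_eq_of_covBy_of_not_le [IsStronglyAtomic L] [WellFoundedGT L] (huv : u ⋖ v)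
    (hv : ¬ v ≤ u ⊔ y) : joinLength v y = joinLength u y + 1 := by
  have hcov : u ⊔ y ⋖ v ⊔ y := by
    have h := covBy_sup_of_covBy_of_not_le huv le_sup_left hv
    rwa [sup_right_comm, sup_eq_right.2 huv.le] at h
  have hv' : intervalLength v (v ⊔ y) = intervalLength u (u ⊔ y) :=
    ENat.add_left_injective_of_ne_top ENat.one_ne_top <|
      (intervalLength_eq_of_covBy huv le_sup_left).symm.trans
        (intervalLength_eq_of_covBy_right le_sup_left hcov)
  rw [joinLength, joinLength, hv', intervalLength_eq_of_covBy_right le_sup_right hcov, add_assoc]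

theorem joinLength_le_add_one_of_adj [IsStronglyAtomic L] [WellFoundedGT L]
    (h : (SimpleGraph.hasse L).Adj u v) : joinLength u y ≤ joinLength v y + 1 := by
  rcases h with huv | hvu
  · by_cases hv : v ≤ u ⊔ y
    · exact (joinLength_eq_of_covBy_of_le huv hv).le
    · exact (joinLength_eq_of_covBy_of_not_le huv hv ▸ le_self_add).trans le_self_add
  · by_cases hu : u ≤ v ⊔ y
    · exact (joinLength_eq_of_covBy_of_le hvu hu ▸ le_self_add).trans le_self_add
    · exact (joinLength_eq_of_covBy_of_not_le hvu hu).le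

theorem exists_hasse_adj_joinLength_add_one_eq [IsStronglyAtomic L] [WellFoundedGT L]
    (hu : u ≠ y) : ∃ v, (SimpleGraph.hasse L).Adj u v ∧ joinLength v y + 1 = joinLength u y := by
  rcases (le_sup_left : u ≤ u ⊔ y).lt_or_eq with hlt | heq
  · obtain ⟨v, huv, hv⟩ := exists_covBy_le_of_lt hlt
    exact ⟨v, Or.inl huv, (joinLength_eq_of_covBy_of_le huv hv).symm⟩
  · obtain ⟨v, hyv, hvu⟩ := exists_le_covBy_of_lt ((sup_eq_left.1 heq.symm).lt_of_ne hu.symm)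
    refine ⟨v, Or.inr hvu, (joinLength_eq_of_covBy_of_not_le hvu ?_).symm⟩
    rw [sup_eq_left.2 hyv]
    exact hvu.lt.not_ge

end Lattice

/-- In a semimodular lattice of finite length, the distance of x and y in the covering graph
is length([x, x⊔y]) + length([y, x⊔y]). -/
theorem semimodular_distance {L : Type*} [Lattice L]
    (hsm : ∀ a b : L, a ⊓ b ⋖ a → b ⋖ a ⊔ b)
    (hfl : (Set.univ : Set L).chainHeight (· < ·) ≠ ⊤)
    (x y : L) :
    ((sInf {k : ℕ | ∃ f : ℕ → L, f 0 = x ∧ f k = y ∧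
        ∀ i < k, f i ⋖ f (i + 1) ∨ f (i + 1) ⋖ f i} : ℕ) : ℕ∞) =
      ((Set.Icc x (x ⊔ y)).chainHeight (· < ·) - 1) + ((Set.Icc y (x ⊔ y)).chainHeight (· < ·) - 1) := by
  have : IsUpperModularLattice L := ⟨hsm _ _⟩
  have : WellFoundedLT L := ⟨wellFounded_of_chainHeight_univ_ne_top hfl⟩
  have : WellFoundedGT L :=
    ⟨wellFounded_of_chainHeight_univ_ne_top ((chainHeight_flip _ _).trans_ne hfl)⟩
  change ((sInf (pathLengths (SimpleGraph.hasse L).Adj x y) : ℕ) : ℕ∞) = joinLength x y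
  exact sInf_pathLengths_eq (φ := (joinLength · y)) (joinLength_self y)
    (fun _ _ => joinLength_le_add_one_of_adj) (fun _ => exists_hasse_adj_joinLength_add_one_eq)
    (joinLength_ne_top hfl x y)
end

section
/- Let k ≥ 2 and let Z = {a_0,...,a_k, b_0,...,b_{k-1}} be a (2k+1)-element set. With α = (join of equ(a_i,a_{i+1}) for 0 ≤ i ≤ k-1) + (join of equ(b_j,b_{j+1}) for 0 ≤ j ≤ k-2), β = join of equ(a_i,b_i) for 0 ≤ i ≤ k-1, γ = join of equ(a_{i+1},b_i) for 0 ≤ i ≤ k-1, and δ = equ(a_0,b_0) + equ(a_k,b_{k-1}), the four equivalences α, β, γ, δ generate the lattice Equ(Z) of all equivalence relations on Z. -/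
private lemma tri3 {A : Type*} {x y u v t : A} :
    (u = v ∨ u = x ∧ v = y ∨ u = y ∧ v = x) →
    (v = t ∨ v = x ∧ t = y ∨ v = y ∧ t = x) →
    (u = t ∨ u = x ∧ t = y ∨ u = y ∧ t = x) := by
  rintro (rfl | ⟨rfl, rfl⟩ | ⟨rfl, rfl⟩) h2 <;>
    rcases h2 with rfl | ⟨h3, rfl⟩ | ⟨h3, rfl⟩ <;> tauto

lemma equ_apply {A : Type*} {x y z w : A} :
    equ x y z w ↔ z = w ∨ (z = x ∧ w = y) ∨ (z = y ∧ w = x) := by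
  constructor
  · intro h
    induction h with
    | rel u v h => exact Or.inr (Or.inl ⟨h.1, h.2⟩)
    | refl u => exact Or.inl rfl
    | symm u v _ ih => rcases ih with h | ⟨h1, h2⟩ | ⟨h1, h2⟩ <;> tauto
    | trans u v t _ _ ih1 ih2 => exact tri3 ih1 ih2
  · rintro (rfl | ⟨rfl, rfl⟩ | ⟨rfl, rfl⟩)
    · exact (equ x y).refl' _
    · exact Relation.EqvGen.rel _ _ ⟨rfl, rfl⟩
    · exact Relation.EqvGen.symm _ _ (Relation.EqvGen.rel _ _ ⟨rfl, rfl⟩)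

lemma equ_le_s15 {A : Type*} {x y : A} {s : Setoid A} : equ x y ≤ s ↔ s x y := by
  constructor
  · intro h; exact Setoid.le_def.mp h (Relation.EqvGen.rel _ _ ⟨rfl, rfl⟩)
  · intro h; exact Setoid.eqvGen_le (by rintro u v ⟨rfl, rfl⟩; exact h)

lemma equ_self_rel {A : Type*} (x y : A) : equ x y x y := Relation.EqvGen.rel _ _ ⟨rfl, rfl⟩

lemma equ_comm {A : Type*} (x y : A) : equ x y = equ y x :=
  Setoid.ext fun z w => by rw [equ_apply, equ_apply]; tauto

lemma equ_self_eq_bot {A : Type*} (x : A) : equ x x = ⊥ :=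
  Setoid.ext fun z w => by
    rw [equ_apply, show (⊥ : Setoid A) z w ↔ z = w from by rw [Setoid.bot_def]]
    constructor
    · rintro (h | ⟨h1, h2⟩ | ⟨h1, h2⟩)
      exacts [h, h1.trans h2.symm, h1.trans h2.symm]
    · exact Or.inl

/-- upper bound principle for binary sups of setoids -/
lemma sup_charP {A : Type*} (X Y : Setoid A) (Q : A → A → Prop)
    (hrefl : ∀ z, Q z z) (hsymm : ∀ z w, Q z w → Q w z)
    (htrans : ∀ z w v, Q z w → Q w v → Q z v)
    (hX : ∀ z w, X z w → Q z w) (hY : ∀ z w, Y z w → Q z w) :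
    ∀ z w, (X ⊔ Y) z w → Q z w := by
  have hle : X ⊔ Y ≤ ⟨Q, ⟨fun z => hrefl z, fun h => hsymm _ _ h, fun h1 h2 => htrans _ _ _ h1 h2⟩⟩ :=
    sup_le (Setoid.le_def.mpr fun {z w} h => hX z w h) (Setoid.le_def.mpr fun {z w} h => hY z w h)
  intro z w h
  exact Setoid.le_def.mp hle h

lemma sup_equ_apply {A : Type*} {x u y z w : A} :
    (equ x u ⊔ equ u y) z w ↔
      z = w ∨ ((z = x ∨ z = u ∨ z = y) ∧ (w = x ∨ w = u ∨ w = y)) := by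
  constructor
  · refine sup_charP (equ x u) (equ u y)
      (fun z w => z = w ∨ ((z = x ∨ z = u ∨ z = y) ∧ (w = x ∨ w = u ∨ w = y))) ?_ ?_ ?_ ?_ ?_ z w
    · intro z; exact Or.inl rfl
    · intro z w h; tauto
    · intro z w v h1 h2
      rcases h1 with rfl | ⟨h1, h1'⟩ <;> rcases h2 with rfl | ⟨h2, h2'⟩ <;> tauto
    · intro z w h; rw [equ_apply] at h; tauto
    · intro z w h; rw [equ_apply] at h; tauto
  · set S := equ x u ⊔ equ u y with hS
    have hxu : S x u := Setoid.le_def.mp le_sup_left (equ_self_rel x u)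
    have huy : S u y := Setoid.le_def.mp le_sup_right (equ_self_rel u y)
    have hxy : S x y := S.trans' hxu huy
    rintro (rfl | ⟨(rfl | rfl | rfl), (rfl | rfl | rfl)⟩) <;>
      first
        | exact S.refl' _
        | assumption
        | exact S.symm' (by assumption)
        | exact S.trans' hxu (S.symm' (by assumption))
        | exact S.trans' (by assumption) huy

lemma zadori_midpoint {A : Type*} {x y u v : A} (hux : u ≠ x) (huy : u ≠ y) (hvx : v ≠ x)
    (hvy : v ≠ y) (huv : u ≠ v) :
    (equ x u ⊔ equ u y) ⊓ (equ x v ⊔ equ v y) = equ x y := by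
  apply le_antisymm
  · refine Setoid.le_def.mpr fun {z w} h => ?_
    rw [Setoid.inf_iff_and] at h
    obtain ⟨h1, h2⟩ := h
    rw [sup_equ_apply] at h1 h2
    have : z = w ∨ (z = x ∧ w = y) ∨ (z = y ∧ w = x) := by
      by_cases hzw : z = w
      · exact Or.inl hzw
      · obtain ⟨hz1, hw1⟩ := h1.resolve_left hzw
        obtain ⟨hz2, hw2⟩ := h2.resolve_left hzw
        have hz : z = x ∨ z = y := by
          rcases hz1 with h' | h' | h'
          · exact Or.inl h'
          · subst h'; rcases hz2 with h'' | h'' | h'' <;>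
              [exact absurd h'' hux; exact absurd h'' huv; exact absurd h'' huy]
          · exact Or.inr h'
        have hw : w = x ∨ w = y := by
          rcases hw1 with h' | h' | h'
          · exact Or.inl h'
          · subst h'; rcases hw2 with h'' | h'' | h'' <;>
              [exact absurd h'' hux; exact absurd h'' huv; exact absurd h'' huy]
          · exact Or.inr h'
        rcases hz with h1' | h1' <;> rcases hw with h2' | h2'
        · exact absurd (h1'.trans h2'.symm) hzw
        · exact Or.inr (Or.inl ⟨h1', h2'⟩)
        · exact Or.inr (Or.inr ⟨h1', h2'⟩)
        · exact absurd (h1'.trans h2'.symm) hzw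
    rcases this with h | ⟨h1', h2'⟩ | ⟨h1', h2'⟩
    · rw [h]
    · rw [h1', h2']; exact equ_self_rel x y
    · rw [h1', h2']; exact (equ x y).symm' (equ_self_rel x y)
  · rw [equ_le_s15, Setoid.inf_iff_and, sup_equ_apply, sup_equ_apply]
    tauto

def pt {Z : Type*} (a b : ℕ → Z) (m : ℕ) : Z := if m % 2 = 0 then a (m / 2) else b (m / 2)

section Zadori

variable {Z : Type*} {k : ℕ} {a b : ℕ → Z} {pos : Z → ℕ}

lemma pt_even (a b : ℕ → Z) (i : ℕ) : pt a b (2 * i) = a i := by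
  have h1 : (2 * i) % 2 = 0 := by omega
  have h2 : (2 * i) / 2 = i := by omega
  simp [pt, h1, h2]

lemma pt_odd (a b : ℕ → Z) (i : ℕ) : pt a b (2 * i + 1) = b i := by
  have h1 : ¬ ((2 * i + 1) % 2 = 0) := by omega
  have h2 : (2 * i + 1) / 2 = i := by omega
  simp [pt, h1, h2]

lemma rel_biSup {Z : Type*} {ι : Sort*} {p : ι → Prop} (f : ι → Setoid Z) {i : ι} (hi : p i)
    {z w : Z} (h : f i z w) : (⨆ j, ⨆ _ : p j, f j) z w :=
  Setoid.le_def.mp (le_iSup₂ (f := fun j _ => f j) i hi) h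

lemma biSup_charP {Z : Type*} {ι : Sort*} (f : ι → Setoid Z) (p : ι → Prop) (Q : Z → Z → Prop)
    (hrefl : ∀ z, Q z z) (hsymm : ∀ z w, Q z w → Q w z)
    (htrans : ∀ z w v, Q z w → Q w v → Q z v)
    (hf : ∀ i, p i → ∀ z w, f i z w → Q z w) :
    ∀ z w, (⨆ j, ⨆ _ : p j, f j) z w → Q z w := by
  have hle : (⨆ j, ⨆ _ : p j, f j) ≤
      ⟨Q, ⟨fun z => hrefl z, fun h => hsymm _ _ h, fun h1 h2 => htrans _ _ _ h1 h2⟩⟩ :=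
    iSup₂_le fun i hi => Setoid.le_def.mpr fun {z w} h => hf i hi z w h
  intro z w h
  exact Setoid.le_def.mp hle h

section chars

variable (hinj : ∀ m n, m ≤ 2 * k → n ≤ 2 * k → pt a b m = pt a b n → m = n)
  (hp1 : ∀ z, pos z ≤ 2 * k) (hp2 : ∀ z, pt a b (pos z) = z)

include hinj hp1 hp2

lemma pos_pt {m : ℕ} (hm : m ≤ 2 * k) : pos (pt a b m) = m :=
  hinj _ _ (hp1 _) hm (hp2 _)

lemma pos_a {i : ℕ} (hi : i ≤ k) : pos (a i) = 2 * i := by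
  rw [← pt_even a b i]; exact pos_pt hinj hp1 hp2 (by omega)

lemma pos_b {j : ℕ} (hj : j < k) : pos (b j) = 2 * j + 1 := by
  rw [← pt_odd a b j]; exact pos_pt hinj hp1 hp2 (by omega)

lemma eq_of_pos_eq {z w : Z} (h : pos z = pos w) : z = w := by
  rw [← hp2 z, ← hp2 w, h]

lemma alpha_char : ∀ z w : Z,
    ((⨆ i ∈ Finset.range k, equ (a i) (a (i + 1))) ⊔
      ⨆ i ∈ Finset.range (k - 1), equ (b i) (b (i + 1))) z w ↔ pos z % 2 = pos w % 2 := by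
  set S := (⨆ i ∈ Finset.range k, equ (a i) (a (i + 1))) ⊔
      ⨆ i ∈ Finset.range (k - 1), equ (b i) (b (i + 1)) with hS
  have posa : ∀ i, i ≤ k → pos (a i) = 2 * i := fun i hi => pos_a hinj hp1 hp2 hi
  have posb : ∀ j, j < k → pos (b j) = 2 * j + 1 := fun j hj => pos_b hinj hp1 hp2 hj
  intro z w
  constructor
  · refine sup_charP _ _ (fun z w => pos z % 2 = pos w % 2) (fun _ => rfl)
      (fun _ _ h => h.symm) (fun _ _ _ h1 h2 => h1.trans h2) ?_ ?_ z w
    · refine biSup_charP _ _ _ (fun _ => rfl) (fun _ _ h => h.symm)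
        (fun _ _ _ h1 h2 => h1.trans h2) ?_
      intro i hi z w h
      rw [Finset.mem_range] at hi
      rw [equ_apply] at h
      rcases h with h | ⟨h1, h2⟩ | ⟨h1, h2⟩
      · rw [h]
      · rw [h1, h2, posa i (by omega), posa (i+1) (by omega)]; omega
      · rw [h1, h2, posa i (by omega), posa (i+1) (by omega)]; omega
    · refine biSup_charP _ _ _ (fun _ => rfl) (fun _ _ h => h.symm)
        (fun _ _ _ h1 h2 => h1.trans h2) ?_
      intro i hi z w h
      rw [Finset.mem_range] at hi
      rw [equ_apply] at h
      rcases h with h | ⟨h1, h2⟩ | ⟨h1, h2⟩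
      · rw [h]
      · rw [h1, h2, posb i (by omega), posb (i+1) (by omega)]; omega
      · rw [h1, h2, posb i (by omega), posb (i+1) (by omega)]; omega
  · intro h
    have relA : ∀ i, i < k → S (a i) (a (i + 1)) := fun i hi =>
      Setoid.le_def.mp le_sup_left
        (rel_biSup _ (Finset.mem_range.mpr hi) (equ_self_rel (a i) (a (i+1))))
    have relB : ∀ j, j < k - 1 → S (b j) (b (j + 1)) := fun j hj =>
      Setoid.le_def.mp le_sup_right
        (rel_biSup _ (Finset.mem_range.mpr hj) (equ_self_rel (b j) (b (j+1))))
    have chainA : ∀ i, i ≤ k → S (a 0) (a i) := by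
      intro i
      induction i with
      | zero => intro _; exact S.refl' _
      | succ n ih => intro hn; exact S.trans' (ih (by omega)) (relA n (by omega))
    have chainB : ∀ j, j ≤ k - 1 → S (b 0) (b j) := by
      intro j
      induction j with
      | zero => intro _; exact S.refl' _
      | succ n ih => intro hn; exact S.trans' (ih (by omega)) (relB n (by omega))
    have hz1 := hp1 z
    have hw1 := hp1 w
    obtain ⟨i, hzi⟩ : ∃ i, pos z = 2 * i ∨ pos z = 2 * i + 1 := ⟨pos z / 2, by omega⟩
    obtain ⟨j, hwj⟩ : ∃ j, pos w = 2 * j ∨ pos w = 2 * j + 1 := ⟨pos w / 2, by omega⟩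
    rcases hzi with hzi | hzi <;> rcases hwj with hwj | hwj
    · have hz : z = a i := by rw [← hp2 z, hzi, pt_even]
      have hw : w = a j := by rw [← hp2 w, hwj, pt_even]
      rw [hz, hw]
      exact S.trans' (S.symm' (chainA i (by omega))) (chainA j (by omega))
    · exact absurd h (by omega)
    · exact absurd h (by omega)
    · have hz : z = b i := by rw [← hp2 z, hzi, pt_odd]
      have hw : w = b j := by rw [← hp2 w, hwj, pt_odd]
      rw [hz, hw]
      exact S.trans' (S.symm' (chainB i (by omega))) (chainB j (by omega))

lemma beta_char : ∀ z w : Z,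
    (⨆ i ∈ Finset.range k, equ (a i) (b i)) z w ↔ pos z / 2 = pos w / 2 := by
  set S := ⨆ i ∈ Finset.range k, equ (a i) (b i) with hS
  intro z w
  constructor
  · refine biSup_charP _ _ (fun z w => pos z / 2 = pos w / 2) (fun _ => rfl)
      (fun _ _ h => h.symm) (fun _ _ _ h1 h2 => h1.trans h2) ?_ z w
    intro i hi z w h
    rw [Finset.mem_range] at hi
    rw [equ_apply] at h
    rcases h with h | ⟨h1, h2⟩ | ⟨h1, h2⟩
    · rw [h]
    · rw [h1, h2, pos_a hinj hp1 hp2 (by omega), pos_b hinj hp1 hp2 (by omega)]; omega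
    · rw [h1, h2, pos_a hinj hp1 hp2 (by omega), pos_b hinj hp1 hp2 (by omega)]; omega
  · intro h
    by_cases hzw : pos z = pos w
    · rw [eq_of_pos_eq hinj hp1 hp2 hzw]
    · have hz1 := hp1 z
      have hw1 := hp1 w
      obtain ⟨i, hik, hcase⟩ : ∃ i, i < k ∧
          (pos z = 2 * i ∧ pos w = 2 * i + 1 ∨ pos z = 2 * i + 1 ∧ pos w = 2 * i) :=
        ⟨pos z / 2, by omega, by omega⟩
      have hrel : S (a i) (b i) :=
        rel_biSup _ (Finset.mem_range.mpr hik) (equ_self_rel (a i) (b i))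
      rcases hcase with ⟨h1, h2⟩ | ⟨h1, h2⟩
      · have hz : z = a i := by rw [← hp2 z, h1, pt_even]
        have hw : w = b i := by rw [← hp2 w, h2, pt_odd]
        rw [hz, hw]; exact hrel
      · have hz : z = b i := by rw [← hp2 z, h1, pt_odd]
        have hw : w = a i := by rw [← hp2 w, h2, pt_even]
        rw [hz, hw]; exact S.symm' hrel

lemma gamma_char : ∀ z w : Z,
    (⨆ i ∈ Finset.range k, equ (a (i + 1)) (b i)) z w ↔ (pos z + 1) / 2 = (pos w + 1) / 2 := by
  set S := ⨆ i ∈ Finset.range k, equ (a (i + 1)) (b i) with hS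
  intro z w
  constructor
  · refine biSup_charP _ _ (fun z w => (pos z + 1) / 2 = (pos w + 1) / 2) (fun _ => rfl)
      (fun _ _ h => h.symm) (fun _ _ _ h1 h2 => h1.trans h2) ?_ z w
    intro i hi z w h
    rw [Finset.mem_range] at hi
    rw [equ_apply] at h
    rcases h with h | ⟨h1, h2⟩ | ⟨h1, h2⟩
    · rw [h]
    · rw [h1, h2, pos_a hinj hp1 hp2 (by omega), pos_b hinj hp1 hp2 (by omega)]; omega
    · rw [h1, h2, pos_a hinj hp1 hp2 (by omega), pos_b hinj hp1 hp2 (by omega)]; omega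
  · intro h
    by_cases hzw : pos z = pos w
    · rw [eq_of_pos_eq hinj hp1 hp2 hzw]
    · have hz1 := hp1 z
      have hw1 := hp1 w
      obtain ⟨i, hik, hcase⟩ : ∃ i, i < k ∧
          (pos z = 2 * i + 1 ∧ pos w = 2 * i + 2 ∨ pos z = 2 * i + 2 ∧ pos w = 2 * i + 1) :=
        ⟨(pos z + 1) / 2 - 1, by omega, by omega⟩
      have hrel : S (a (i + 1)) (b i) :=
        rel_biSup _ (Finset.mem_range.mpr hik) (equ_self_rel (a (i + 1)) (b i))
      rcases hcase with ⟨h1, h2⟩ | ⟨h1, h2⟩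
      · have hz : z = b i := by rw [← hp2 z, h1, pt_odd]
        have hw : w = a (i + 1) := by
          rw [← hp2 w, h2, show 2 * i + 2 = 2 * (i + 1) from by omega, pt_even]
        rw [hz, hw]; exact S.symm' hrel
      · have hz : z = a (i + 1) := by
          rw [← hp2 z, h1, show 2 * i + 2 = 2 * (i + 1) from by omega, pt_even]
        have hw : w = b i := by rw [← hp2 w, h2, pt_odd]
        rw [hz, hw]; exact hrel

lemma delta_char (hk : 2 ≤ k) : ∀ z w : Z,
    (equ (a 0) (b 0) ⊔ equ (a k) (b (k - 1))) z w ↔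
      (pos z = pos w ∨ (pos z ≤ 1 ∧ pos w ≤ 1) ∨
        (2 * k - 1 ≤ pos z ∧ 2 * k - 1 ≤ pos w)) := by
  set S := equ (a 0) (b 0) ⊔ equ (a k) (b (k - 1)) with hS
  have pa0 : pos (a 0) = 0 := by
    have := pos_a hinj hp1 hp2 (show 0 ≤ k by omega); omega
  have pb0 : pos (b 0) = 1 := by
    have := pos_b hinj hp1 hp2 (show 0 < k by omega); omega
  have pak : pos (a k) = 2 * k := pos_a hinj hp1 hp2 le_rfl
  have pbk : pos (b (k - 1)) = 2 * (k - 1) + 1 := pos_b hinj hp1 hp2 (by omega)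
  intro z w
  constructor
  · refine sup_charP _ _ (fun z w => pos z = pos w ∨ (pos z ≤ 1 ∧ pos w ≤ 1) ∨
        (2 * k - 1 ≤ pos z ∧ 2 * k - 1 ≤ pos w)) (fun _ => Or.inl rfl) (fun _ _ h => by tauto)
      (fun _ _ _ h1 h2 => by omega) ?_ ?_ z w
    · intro z w h
      rw [equ_apply] at h
      rcases h with h | ⟨h1, h2⟩ | ⟨h1, h2⟩
      · rw [h]; exact Or.inl rfl
      · rw [h1, h2, pa0, pb0]; omega
      · rw [h1, h2, pa0, pb0]; omega
    · intro z w h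
      rw [equ_apply] at h
      rcases h with h | ⟨h1, h2⟩ | ⟨h1, h2⟩
      · rw [h]; exact Or.inl rfl
      · rw [h1, h2, pak, pbk]; omega
      · rw [h1, h2, pak, pbk]; omega
  · intro h
    have hz1 := hp1 z
    have hw1 := hp1 w
    have rel1 : S (a 0) (b 0) := Setoid.le_def.mp le_sup_left (equ_self_rel _ _)
    have rel2 : S (a k) (b (k - 1)) := Setoid.le_def.mp le_sup_right (equ_self_rel _ _)
    by_cases hzw : pos z = pos w
    · rw [eq_of_pos_eq hinj hp1 hp2 hzw]
    rcases h with h | ⟨h1, h2⟩ | ⟨h1, h2⟩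
    · exact absurd h hzw
    · rcases (by omega : pos z = 0 ∧ pos w = 1 ∨ pos z = 1 ∧ pos w = 0) with ⟨e1, e2⟩ | ⟨e1, e2⟩
      · have hz : z = a 0 := by rw [← hp2 z, e1, show (0:ℕ) = 2*0 from rfl, pt_even]
        have hw : w = b 0 := by rw [← hp2 w, e2, show (1:ℕ) = 2*0+1 from rfl, pt_odd]
        rw [hz, hw]; exact rel1
      · have hz : z = b 0 := by rw [← hp2 z, e1, show (1:ℕ) = 2*0+1 from rfl, pt_odd]
        have hw : w = a 0 := by rw [← hp2 w, e2, show (0:ℕ) = 2*0 from rfl, pt_even]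
        rw [hz, hw]; exact S.symm' rel1
    · rcases (by omega : pos z = 2 * k ∧ pos w = 2 * (k - 1) + 1 ∨
          pos z = 2 * (k - 1) + 1 ∧ pos w = 2 * k) with ⟨e1, e2⟩ | ⟨e1, e2⟩
      · have hz : z = a k := by rw [← hp2 z, e1, pt_even]
        have hw : w = b (k - 1) := by rw [← hp2 w, e2, pt_odd]
        rw [hz, hw]; exact rel2
      · have hz : z = b (k - 1) := by rw [← hp2 z, e1, pt_odd]
        have hw : w = a k := by rw [← hp2 w, e2, pt_even]
        rw [hz, hw]; exact S.symm' rel2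


lemma rel_pt {S x : Setoid Z} {P : ℕ → ℕ → Prop} (hle : x ≤ S)
    (hx : ∀ z w, x z w ↔ P (pos z) (pos w)) (m n : ℕ) (hm : m ≤ 2 * k) (hn : n ≤ 2 * k)
    (h : P m n) : S (pt a b m) (pt a b n) :=
  Setoid.le_def.mp hle ((hx _ _).mpr (by
    rw [pos_pt hinj hp1 hp2 hm, pos_pt hinj hp1 hp2 hn]; exact h))

/-- L1 : γ ⊔ δ -/
lemma char_gd (hk : 2 ≤ k) : ∀ z w : Z,
    ((⨆ i ∈ Finset.range k, equ (a (i + 1)) (b i)) ⊔ (equ (a 0) (b 0) ⊔ equ (a k) (b (k - 1)))) z w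
      ↔ ((pos z ≤ 2 ∧ pos w ≤ 2) ∨ (pos z + 1) / 2 = (pos w + 1) / 2) := by
  set S := (⨆ i ∈ Finset.range k, equ (a (i + 1)) (b i)) ⊔
    (equ (a 0) (b 0) ⊔ equ (a k) (b (k - 1))) with hS
  have hga := gamma_char (k := k) (a := a) (b := b) (pos := pos) hinj hp1 hp2
  have hde := delta_char (k := k) (a := a) (b := b) (pos := pos) hinj hp1 hp2 hk
  have relg := rel_pt (k := k) (a := a) (b := b) (pos := pos) hinj hp1 hp2
    (S := S) (P := fun m n => (m + 1) / 2 = (n + 1) / 2) (le_sup_left) hga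
  have reld := rel_pt (k := k) (a := a) (b := b) (pos := pos) hinj hp1 hp2
    (S := S) (P := fun m n => m = n ∨ (m ≤ 1 ∧ n ≤ 1) ∨ (2 * k - 1 ≤ m ∧ 2 * k - 1 ≤ n))
    (le_sup_right) hde
  intro z w
  constructor
  · refine sup_charP _ _ (fun z w => (pos z ≤ 2 ∧ pos w ≤ 2) ∨ (pos z + 1) / 2 = (pos w + 1) / 2)
      (fun _ => Or.inr rfl) (fun z w h => by omega)
      (fun z w v h1 h2 => by
        have := hp1 z; have := hp1 w; have := hp1 v; omega) ?_ ?_ z w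
    · intro z w h; have := (hga z w).mp h; omega
    · intro z w h
      have := (hde z w).mp h
      have := hp1 z; have := hp1 w
      omega
  · intro h
    have hz1 := hp1 z
    have hw1 := hp1 w
    have key : ∀ m, m ≤ 2 → S (pt a b m) (pt a b 0) := by
      intro m hm
      rcases (by omega : m = 0 ∨ m = 1 ∨ m = 2) with rfl | rfl | rfl
      · exact S.refl' _
      · exact reld 1 0 (by omega) (by omega) (by omega)
      · exact S.trans' (relg 2 1 (by omega) (by omega) (by omega))
          (reld 1 0 (by omega) (by omega) (by omega))
    rcases h with ⟨hm, hn⟩ | h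
    · rw [← hp2 z, ← hp2 w]
      exact S.trans' (key _ hm) (S.symm' (key _ hn))
    · exact Setoid.le_def.mp le_sup_left ((hga z w).mpr h)

/-- L2 : β ⊔ δ -/
lemma char_bd (hk : 2 ≤ k) : ∀ z w : Z,
    ((⨆ i ∈ Finset.range k, equ (a i) (b i)) ⊔ (equ (a 0) (b 0) ⊔ equ (a k) (b (k - 1)))) z w
      ↔ ((2 * k - 2 ≤ pos z ∧ 2 * k - 2 ≤ pos w) ∨ pos z / 2 = pos w / 2) := by
  set S := (⨆ i ∈ Finset.range k, equ (a i) (b i)) ⊔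
    (equ (a 0) (b 0) ⊔ equ (a k) (b (k - 1))) with hS
  have hbe := beta_char (k := k) (a := a) (b := b) (pos := pos) hinj hp1 hp2
  have hde := delta_char (k := k) (a := a) (b := b) (pos := pos) hinj hp1 hp2 hk
  have relb := rel_pt (k := k) (a := a) (b := b) (pos := pos) hinj hp1 hp2
    (S := S) (P := fun m n => m / 2 = n / 2) (le_sup_left) hbe
  have reld := rel_pt (k := k) (a := a) (b := b) (pos := pos) hinj hp1 hp2
    (S := S) (P := fun m n => m = n ∨ (m ≤ 1 ∧ n ≤ 1) ∨ (2 * k - 1 ≤ m ∧ 2 * k - 1 ≤ n))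
    (le_sup_right) hde
  intro z w
  constructor
  · refine sup_charP _ _
      (fun z w => (2 * k - 2 ≤ pos z ∧ 2 * k - 2 ≤ pos w) ∨ pos z / 2 = pos w / 2)
      (fun _ => Or.inr rfl) (fun z w h => by omega)
      (fun z w v h1 h2 => by
        have := hp1 z; have := hp1 w; have := hp1 v; omega) ?_ ?_ z w
    · intro z w h; have := (hbe z w).mp h; omega
    · intro z w h
      have := (hde z w).mp h
      have := hp1 z; have := hp1 w
      omega
  · intro h
    have hz1 := hp1 z
    have hw1 := hp1 w
    have key : ∀ m, 2 * k - 2 ≤ m → m ≤ 2 * k → S (pt a b m) (pt a b (2 * k - 2)) := by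
      intro m hm hm2
      rcases (by omega : m = 2 * k - 2 ∨ m = 2 * k - 1 ∨ m = 2 * k) with rfl | rfl | rfl
      · exact S.refl' _
      · exact relb (2 * k - 1) (2 * k - 2) (by omega) (by omega) (by omega)
      · exact S.trans' (reld (2 * k) (2 * k - 1) (by omega) (by omega) (by omega))
          (relb (2 * k - 1) (2 * k - 2) (by omega) (by omega) (by omega))
    rcases h with ⟨hm, hn⟩ | h
    · rw [← hp2 z, ← hp2 w]
      exact S.trans' (key _ hm hz1) (S.symm' (key _ hn hw1))
    · exact Setoid.le_def.mp le_sup_left ((hbe z w).mpr h)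

/-- L3 : β ⊔ SL(2i+2, 2i+1) -/
lemma char_b_SLe (i : ℕ) (hik : i + 2 ≤ k) (x : Setoid Z)
    (hx : ∀ z w, x z w ↔ (pos z = pos w ∨
      (pos z % 2 = 0 ∧ pos w % 2 = 0 ∧ pos z ≤ 2 * i + 2 ∧ pos w ≤ 2 * i + 2) ∨
      (pos z % 2 = 1 ∧ pos w % 2 = 1 ∧ pos z ≤ 2 * i + 1 ∧ pos w ≤ 2 * i + 1))) :
    ∀ z w : Z, ((⨆ i ∈ Finset.range k, equ (a i) (b i)) ⊔ x) z w ↔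
      ((pos z ≤ 2 * i + 3 ∧ pos w ≤ 2 * i + 3) ∨ pos z / 2 = pos w / 2) := by
  set S := (⨆ i ∈ Finset.range k, equ (a i) (b i)) ⊔ x with hS
  have hbe := beta_char (k := k) (a := a) (b := b) (pos := pos) hinj hp1 hp2
  have relb := rel_pt (k := k) (a := a) (b := b) (pos := pos) hinj hp1 hp2
    (S := S) (P := fun m n => m / 2 = n / 2) (le_sup_left) hbe
  have relx := rel_pt (k := k) (a := a) (b := b) (pos := pos) hinj hp1 hp2
    (S := S) (P := fun m n => m = n ∨
      (m % 2 = 0 ∧ n % 2 = 0 ∧ m ≤ 2 * i + 2 ∧ n ≤ 2 * i + 2) ∨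
      (m % 2 = 1 ∧ n % 2 = 1 ∧ m ≤ 2 * i + 1 ∧ n ≤ 2 * i + 1)) (le_sup_right) hx
  intro z w
  constructor
  · refine sup_charP _ _
      (fun z w => (pos z ≤ 2 * i + 3 ∧ pos w ≤ 2 * i + 3) ∨ pos z / 2 = pos w / 2)
      (fun _ => Or.inr rfl) (fun z w h => by omega)
      (fun z w v h1 h2 => by omega) ?_ ?_ z w
    · intro z w h; have := (hbe z w).mp h; omega
    · intro z w h; have := (hx z w).mp h; omega
  · intro h
    have hz1 := hp1 z
    have hw1 := hp1 w
    have key : ∀ m, m ≤ 2 * i + 3 → S (pt a b m) (pt a b 0) := by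
      intro m hm
      rcases (by omega : m % 2 = 0 ∨ (m % 2 = 1 ∧ m ≤ 2 * i + 1) ∨ m = 2 * i + 3)
        with h0 | ⟨h1, h2⟩ | rfl
      · exact relx m 0 (by omega) (by omega) (by omega)
      · exact S.trans' (relx m 1 (by omega) (by omega) (by omega))
          (relb 1 0 (by omega) (by omega) (by omega))
      · exact S.trans' (relb (2 * i + 3) (2 * i + 2) (by omega) (by omega) (by omega))
          (relx (2 * i + 2) 0 (by omega) (by omega) (by omega))
    rcases h with ⟨hm, hn⟩ | h
    · rw [← hp2 z, ← hp2 w]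
      exact S.trans' (key _ hm) (S.symm' (key _ hn))
    · exact Setoid.le_def.mp le_sup_left ((hbe z w).mpr h)

/-- L4 : γ ⊔ SL(2i+2, 2i+3) -/
lemma char_g_SLo (i : ℕ) (hik : i + 2 ≤ k) (x : Setoid Z)
    (hx : ∀ z w, x z w ↔ (pos z = pos w ∨
      (pos z % 2 = 0 ∧ pos w % 2 = 0 ∧ pos z ≤ 2 * i + 2 ∧ pos w ≤ 2 * i + 2) ∨
      (pos z % 2 = 1 ∧ pos w % 2 = 1 ∧ pos z ≤ 2 * i + 3 ∧ pos w ≤ 2 * i + 3))) :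
    ∀ z w : Z, ((⨆ i ∈ Finset.range k, equ (a (i + 1)) (b i)) ⊔ x) z w ↔
      ((pos z ≤ 2 * i + 4 ∧ pos w ≤ 2 * i + 4) ∨ (pos z + 1) / 2 = (pos w + 1) / 2) := by
  set S := (⨆ i ∈ Finset.range k, equ (a (i + 1)) (b i)) ⊔ x with hS
  have hga := gamma_char (k := k) (a := a) (b := b) (pos := pos) hinj hp1 hp2
  have relg := rel_pt (k := k) (a := a) (b := b) (pos := pos) hinj hp1 hp2
    (S := S) (P := fun m n => (m + 1) / 2 = (n + 1) / 2) (le_sup_left) hga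
  have relx := rel_pt (k := k) (a := a) (b := b) (pos := pos) hinj hp1 hp2
    (S := S) (P := fun m n => m = n ∨
      (m % 2 = 0 ∧ n % 2 = 0 ∧ m ≤ 2 * i + 2 ∧ n ≤ 2 * i + 2) ∨
      (m % 2 = 1 ∧ n % 2 = 1 ∧ m ≤ 2 * i + 3 ∧ n ≤ 2 * i + 3)) (le_sup_right) hx
  intro z w
  constructor
  · refine sup_charP _ _
      (fun z w => (pos z ≤ 2 * i + 4 ∧ pos w ≤ 2 * i + 4) ∨ (pos z + 1) / 2 = (pos w + 1) / 2)
      (fun _ => Or.inr rfl) (fun z w h => by omega)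
      (fun z w v h1 h2 => by omega) ?_ ?_ z w
    · intro z w h; have := (hga z w).mp h; omega
    · intro z w h; have := (hx z w).mp h; omega
  · intro h
    have hz1 := hp1 z
    have hw1 := hp1 w
    have oddcase : ∀ m, m % 2 = 1 → m ≤ 2 * i + 3 → S (pt a b m) (pt a b 0) := by
      intro m h1 h2
      exact S.trans' (relx m 1 (by omega) (by omega) (by omega))
        (S.trans' (relg 1 2 (by omega) (by omega) (by omega))
          (relx 2 0 (by omega) (by omega) (by omega)))
    have key : ∀ m, m ≤ 2 * i + 4 → S (pt a b m) (pt a b 0) := by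
      intro m hm
      rcases (by omega : (m % 2 = 0 ∧ m ≤ 2 * i + 2) ∨ (m % 2 = 1 ∧ m ≤ 2 * i + 3) ∨
        m = 2 * i + 4) with ⟨h1, h2⟩ | ⟨h1, h2⟩ | rfl
      · exact relx m 0 (by omega) (by omega) (by omega)
      · exact oddcase m h1 h2
      · exact S.trans' (relg (2 * i + 4) (2 * i + 3) (by omega) (by omega) (by omega))
          (oddcase (2 * i + 3) (by omega) (by omega))
    rcases h with ⟨hm, hn⟩ | h
    · rw [← hp2 z, ← hp2 w]
      exact S.trans' (key _ hm) (S.symm' (key _ hn))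
    · exact Setoid.le_def.mp le_sup_left ((hga z w).mpr h)

/-- L5 : γ ⊔ SR(2i+2, 2i+3) -/
lemma char_g_SRo (i : ℕ) (hik : i + 2 ≤ k) (x : Setoid Z)
    (hx : ∀ z w, x z w ↔ (pos z = pos w ∨
      (pos z % 2 = 0 ∧ pos w % 2 = 0 ∧ 2 * i + 2 ≤ pos z ∧ 2 * i + 2 ≤ pos w) ∨
      (pos z % 2 = 1 ∧ pos w % 2 = 1 ∧ 2 * i + 3 ≤ pos z ∧ 2 * i + 3 ≤ pos w))) :
    ∀ z w : Z, ((⨆ i ∈ Finset.range k, equ (a (i + 1)) (b i)) ⊔ x) z w ↔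
      ((2 * i + 1 ≤ pos z ∧ 2 * i + 1 ≤ pos w) ∨ (pos z + 1) / 2 = (pos w + 1) / 2) := by
  set S := (⨆ i ∈ Finset.range k, equ (a (i + 1)) (b i)) ⊔ x with hS
  have hga := gamma_char (k := k) (a := a) (b := b) (pos := pos) hinj hp1 hp2
  have relg := rel_pt (k := k) (a := a) (b := b) (pos := pos) hinj hp1 hp2
    (S := S) (P := fun m n => (m + 1) / 2 = (n + 1) / 2) (le_sup_left) hga
  have relx := rel_pt (k := k) (a := a) (b := b) (pos := pos) hinj hp1 hp2
    (S := S) (P := fun m n => m = n ∨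
      (m % 2 = 0 ∧ n % 2 = 0 ∧ 2 * i + 2 ≤ m ∧ 2 * i + 2 ≤ n) ∨
      (m % 2 = 1 ∧ n % 2 = 1 ∧ 2 * i + 3 ≤ m ∧ 2 * i + 3 ≤ n)) (le_sup_right) hx
  intro z w
  constructor
  · refine sup_charP _ _
      (fun z w => (2 * i + 1 ≤ pos z ∧ 2 * i + 1 ≤ pos w) ∨ (pos z + 1) / 2 = (pos w + 1) / 2)
      (fun _ => Or.inr rfl) (fun z w h => by omega)
      (fun z w v h1 h2 => by omega) ?_ ?_ z w
    · intro z w h; have := (hga z w).mp h; omega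
    · intro z w h; have := (hx z w).mp h; omega
  · intro h
    have hz1 := hp1 z
    have hw1 := hp1 w
    have key : ∀ m, 2 * i + 1 ≤ m → m ≤ 2 * k → S (pt a b m) (pt a b (2 * k)) := by
      intro m hm hm2
      rcases (by omega : (m % 2 = 0 ∧ 2 * i + 2 ≤ m) ∨ (m % 2 = 1 ∧ 2 * i + 3 ≤ m) ∨
        m = 2 * i + 1) with ⟨h1, h2⟩ | ⟨h1, h2⟩ | rfl
      · exact relx m (2 * k) (by omega) (by omega) (by omega)
      · exact S.trans' (relx m (2 * k - 1) (by omega) (by omega) (by omega))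
          (relg (2 * k - 1) (2 * k) (by omega) (by omega) (by omega))
      · exact S.trans' (relg (2 * i + 1) (2 * i + 2) (by omega) (by omega) (by omega))
          (relx (2 * i + 2) (2 * k) (by omega) (by omega) (by omega))
    rcases h with ⟨hm, hn⟩ | h
    · rw [← hp2 z, ← hp2 w]
      exact S.trans' (key _ hm hz1) (S.symm' (key _ hn hw1))
    · exact Setoid.le_def.mp le_sup_left ((hga z w).mpr h)

/-- L6 : β ⊔ SR(2i+2, 2i+1) -/
lemma char_b_SRe (i : ℕ) (hik : i + 2 ≤ k) (x : Setoid Z)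
    (hx : ∀ z w, x z w ↔ (pos z = pos w ∨
      (pos z % 2 = 0 ∧ pos w % 2 = 0 ∧ 2 * i + 2 ≤ pos z ∧ 2 * i + 2 ≤ pos w) ∨
      (pos z % 2 = 1 ∧ pos w % 2 = 1 ∧ 2 * i + 1 ≤ pos z ∧ 2 * i + 1 ≤ pos w))) :
    ∀ z w : Z, ((⨆ i ∈ Finset.range k, equ (a i) (b i)) ⊔ x) z w ↔
      ((2 * i ≤ pos z ∧ 2 * i ≤ pos w) ∨ pos z / 2 = pos w / 2) := by
  set S := (⨆ i ∈ Finset.range k, equ (a i) (b i)) ⊔ x with hS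
  have hbe := beta_char (k := k) (a := a) (b := b) (pos := pos) hinj hp1 hp2
  have relb := rel_pt (k := k) (a := a) (b := b) (pos := pos) hinj hp1 hp2
    (S := S) (P := fun m n => m / 2 = n / 2) (le_sup_left) hbe
  have relx := rel_pt (k := k) (a := a) (b := b) (pos := pos) hinj hp1 hp2
    (S := S) (P := fun m n => m = n ∨
      (m % 2 = 0 ∧ n % 2 = 0 ∧ 2 * i + 2 ≤ m ∧ 2 * i + 2 ≤ n) ∨
      (m % 2 = 1 ∧ n % 2 = 1 ∧ 2 * i + 1 ≤ m ∧ 2 * i + 1 ≤ n)) (le_sup_right) hx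
  intro z w
  constructor
  · refine sup_charP _ _
      (fun z w => (2 * i ≤ pos z ∧ 2 * i ≤ pos w) ∨ pos z / 2 = pos w / 2)
      (fun _ => Or.inr rfl) (fun z w h => by omega)
      (fun z w v h1 h2 => by omega) ?_ ?_ z w
    · intro z w h; have := (hbe z w).mp h; omega
    · intro z w h; have := (hx z w).mp h; omega
  · intro h
    have hz1 := hp1 z
    have hw1 := hp1 w
    have oddcase : ∀ m, m % 2 = 1 → 2 * i + 1 ≤ m → m ≤ 2 * k → S (pt a b m) (pt a b (2 * k)) := by
      intro m h1 h2 h3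
      exact S.trans' (relx m (2 * i + 3) (by omega) (by omega) (by omega))
        (S.trans' (relb (2 * i + 3) (2 * i + 2) (by omega) (by omega) (by omega))
          (relx (2 * i + 2) (2 * k) (by omega) (by omega) (by omega)))
    have key : ∀ m, 2 * i ≤ m → m ≤ 2 * k → S (pt a b m) (pt a b (2 * k)) := by
      intro m hm hm2
      rcases (by omega : (m % 2 = 0 ∧ 2 * i + 2 ≤ m) ∨ (m % 2 = 1 ∧ 2 * i + 1 ≤ m) ∨
        m = 2 * i) with ⟨h1, h2⟩ | ⟨h1, h2⟩ | rfl
      · exact relx m (2 * k) (by omega) (by omega) (by omega)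
      · exact oddcase m h1 h2 hm2
      · exact S.trans' (relb (2 * i) (2 * i + 1) (by omega) (by omega) (by omega))
          (oddcase (2 * i + 1) (by omega) (by omega) (by omega))
    rcases h with ⟨hm, hn⟩ | h
    · rw [← hp2 z, ← hp2 w]
      exact S.trans' (key _ hm hz1) (S.symm' (key _ hn hw1))
    · exact Setoid.le_def.mp le_sup_left ((hbe z w).mpr h)

/-- L7 : γ ⊔ SL(2i, 2i+1), for 1 ≤ i -/
lemma char_g_SLe2 (i : ℕ) (h1i : 1 ≤ i) (hik : i + 1 ≤ k) (x : Setoid Z)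
    (hx : ∀ z w, x z w ↔ (pos z = pos w ∨
      (pos z % 2 = 0 ∧ pos w % 2 = 0 ∧ pos z ≤ 2 * i ∧ pos w ≤ 2 * i) ∨
      (pos z % 2 = 1 ∧ pos w % 2 = 1 ∧ pos z ≤ 2 * i + 1 ∧ pos w ≤ 2 * i + 1))) :
    ∀ z w : Z, ((⨆ i ∈ Finset.range k, equ (a (i + 1)) (b i)) ⊔ x) z w ↔
      ((pos z ≤ 2 * i + 2 ∧ pos w ≤ 2 * i + 2) ∨ (pos z + 1) / 2 = (pos w + 1) / 2) := by
  set S := (⨆ i ∈ Finset.range k, equ (a (i + 1)) (b i)) ⊔ x with hS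
  have hga := gamma_char (k := k) (a := a) (b := b) (pos := pos) hinj hp1 hp2
  have relg := rel_pt (k := k) (a := a) (b := b) (pos := pos) hinj hp1 hp2
    (S := S) (P := fun m n => (m + 1) / 2 = (n + 1) / 2) (le_sup_left) hga
  have relx := rel_pt (k := k) (a := a) (b := b) (pos := pos) hinj hp1 hp2
    (S := S) (P := fun m n => m = n ∨
      (m % 2 = 0 ∧ n % 2 = 0 ∧ m ≤ 2 * i ∧ n ≤ 2 * i) ∨
      (m % 2 = 1 ∧ n % 2 = 1 ∧ m ≤ 2 * i + 1 ∧ n ≤ 2 * i + 1)) (le_sup_right) hx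
  intro z w
  constructor
  · refine sup_charP _ _
      (fun z w => (pos z ≤ 2 * i + 2 ∧ pos w ≤ 2 * i + 2) ∨ (pos z + 1) / 2 = (pos w + 1) / 2)
      (fun _ => Or.inr rfl) (fun z w h => by omega)
      (fun z w v h1 h2 => by omega) ?_ ?_ z w
    · intro z w h; have := (hga z w).mp h; omega
    · intro z w h; have := (hx z w).mp h; omega
  · intro h
    have hz1 := hp1 z
    have hw1 := hp1 w
    have oddcase : ∀ m, m % 2 = 1 → m ≤ 2 * i + 1 → S (pt a b m) (pt a b 0) := by
      intro m h1 h2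
      exact S.trans' (relx m 1 (by omega) (by omega) (by omega))
        (S.trans' (relg 1 2 (by omega) (by omega) (by omega))
          (relx 2 0 (by omega) (by omega) (by omega)))
    have key : ∀ m, m ≤ 2 * i + 2 → S (pt a b m) (pt a b 0) := by
      intro m hm
      rcases (by omega : (m % 2 = 0 ∧ m ≤ 2 * i) ∨ (m % 2 = 1 ∧ m ≤ 2 * i + 1) ∨
        m = 2 * i + 2) with ⟨h1, h2⟩ | ⟨h1, h2⟩ | rfl
      · exact relx m 0 (by omega) (by omega) (by omega)
      · exact oddcase m h1 h2
      · exact S.trans' (relg (2 * i + 2) (2 * i + 1) (by omega) (by omega) (by omega))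
          (oddcase (2 * i + 1) (by omega) (by omega))
    rcases h with ⟨hm, hn⟩ | h
    · rw [← hp2 z, ← hp2 w]
      exact S.trans' (key _ hm) (S.symm' (key _ hn))
    · exact Setoid.le_def.mp le_sup_left ((hga z w).mpr h)

/-- L8 : γ ⊔ equ(a i, a (i+1)) -/
lemma char_g_atom (i : ℕ) (hik : i + 1 ≤ k) (x : Setoid Z)
    (hx : ∀ z w, x z w ↔ (pos z = pos w ∨
      (pos z = 2 * i ∧ pos w = 2 * i + 2) ∨ (pos z = 2 * i + 2 ∧ pos w = 2 * i))) :
    ∀ z w : Z, ((⨆ i ∈ Finset.range k, equ (a (i + 1)) (b i)) ⊔ x) z w ↔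
      (((2 * i - 1 ≤ pos z ∧ pos z ≤ 2 * i + 2) ∧ (2 * i - 1 ≤ pos w ∧ pos w ≤ 2 * i + 2)) ∨
        (pos z + 1) / 2 = (pos w + 1) / 2) := by
  set S := (⨆ i ∈ Finset.range k, equ (a (i + 1)) (b i)) ⊔ x with hS
  have hga := gamma_char (k := k) (a := a) (b := b) (pos := pos) hinj hp1 hp2
  have relg := rel_pt (k := k) (a := a) (b := b) (pos := pos) hinj hp1 hp2
    (S := S) (P := fun m n => (m + 1) / 2 = (n + 1) / 2) (le_sup_left) hga
  have relx := rel_pt (k := k) (a := a) (b := b) (pos := pos) hinj hp1 hp2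
    (S := S) (P := fun m n => m = n ∨ (m = 2 * i ∧ n = 2 * i + 2) ∨ (m = 2 * i + 2 ∧ n = 2 * i))
    (le_sup_right) hx
  intro z w
  constructor
  · refine sup_charP _ _
      (fun z w => ((2 * i - 1 ≤ pos z ∧ pos z ≤ 2 * i + 2) ∧
        (2 * i - 1 ≤ pos w ∧ pos w ≤ 2 * i + 2)) ∨ (pos z + 1) / 2 = (pos w + 1) / 2)
      (fun _ => Or.inr rfl) (fun z w h => by omega)
      (fun z w v h1 h2 => by omega) ?_ ?_ z w
    · intro z w h; have := (hga z w).mp h; omega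
    · intro z w h; have := (hx z w).mp h; omega
  · intro h
    have hz1 := hp1 z
    have hw1 := hp1 w
    have key : ∀ m, 2 * i - 1 ≤ m → m ≤ 2 * i + 2 → S (pt a b m) (pt a b (2 * i)) := by
      intro m hm hm2
      rcases (by omega : m = 2 * i ∨ m = 2 * i + 2 ∨ m = 2 * i + 1 ∨ (1 ≤ i ∧ m = 2 * i - 1))
        with rfl | rfl | rfl | ⟨h1, rfl⟩
      · exact S.refl' _
      · exact relx (2 * i + 2) (2 * i) (by omega) (by omega) (by omega)
      · exact S.trans' (relg (2 * i + 1) (2 * i + 2) (by omega) (by omega) (by omega))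
          (relx (2 * i + 2) (2 * i) (by omega) (by omega) (by omega))
      · exact relg (2 * i - 1) (2 * i) (by omega) (by omega) (by omega)
    rcases h with ⟨⟨hm1, hm2⟩, hn1, hn2⟩ | h
    · rw [← hp2 z, ← hp2 w]
      exact S.trans' (key _ hm1 hm2) (S.symm' (key _ hn1 hn2))
    · exact Setoid.le_def.mp le_sup_left ((hga z w).mpr h)

/-- L9 : β ⊔ equ(a i, a (i+1)) -/
lemma char_b_atom (i : ℕ) (hik : i + 1 ≤ k) (x : Setoid Z)
    (hx : ∀ z w, x z w ↔ (pos z = pos w ∨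
      (pos z = 2 * i ∧ pos w = 2 * i + 2) ∨ (pos z = 2 * i + 2 ∧ pos w = 2 * i))) :
    ∀ z w : Z, ((⨆ i ∈ Finset.range k, equ (a i) (b i)) ⊔ x) z w ↔
      (((2 * i ≤ pos z ∧ pos z ≤ 2 * i + 3) ∧ (2 * i ≤ pos w ∧ pos w ≤ 2 * i + 3)) ∨
        pos z / 2 = pos w / 2) := by
  set S := (⨆ i ∈ Finset.range k, equ (a i) (b i)) ⊔ x with hS
  have hbe := beta_char (k := k) (a := a) (b := b) (pos := pos) hinj hp1 hp2
  have relb := rel_pt (k := k) (a := a) (b := b) (pos := pos) hinj hp1 hp2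
    (S := S) (P := fun m n => m / 2 = n / 2) (le_sup_left) hbe
  have relx := rel_pt (k := k) (a := a) (b := b) (pos := pos) hinj hp1 hp2
    (S := S) (P := fun m n => m = n ∨ (m = 2 * i ∧ n = 2 * i + 2) ∨ (m = 2 * i + 2 ∧ n = 2 * i))
    (le_sup_right) hx
  intro z w
  constructor
  · refine sup_charP _ _
      (fun z w => ((2 * i ≤ pos z ∧ pos z ≤ 2 * i + 3) ∧
        (2 * i ≤ pos w ∧ pos w ≤ 2 * i + 3)) ∨ pos z / 2 = pos w / 2)
      (fun _ => Or.inr rfl) (fun z w h => by omega)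
      (fun z w v h1 h2 => by omega) ?_ ?_ z w
    · intro z w h; have := (hbe z w).mp h; omega
    · intro z w h; have := (hx z w).mp h; omega
  · intro h
    have hz1 := hp1 z
    have hw1 := hp1 w
    have key : ∀ m, 2 * i ≤ m → m ≤ 2 * i + 3 → m ≤ 2 * k → S (pt a b m) (pt a b (2 * i)) := by
      intro m hm hm2 hm3
      rcases (by omega : m = 2 * i ∨ m = 2 * i + 1 ∨ m = 2 * i + 2 ∨
        (m = 2 * i + 3 ∧ 2 * i + 3 ≤ 2 * k)) with rfl | rfl | rfl | ⟨rfl, h3⟩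
      · exact S.refl' _
      · exact relb (2 * i + 1) (2 * i) (by omega) (by omega) (by omega)
      · exact relx (2 * i + 2) (2 * i) (by omega) (by omega) (by omega)
      · exact S.trans' (relb (2 * i + 3) (2 * i + 2) (by omega) (by omega) (by omega))
          (relx (2 * i + 2) (2 * i) (by omega) (by omega) (by omega))
    rcases h with ⟨⟨hm1, hm2⟩, hn1, hn2⟩ | h
    · rw [← hp2 z, ← hp2 w]
      exact S.trans' (key _ hm1 hm2 hz1) (S.symm' (key _ hn1 hn2 hw1))
    · exact Setoid.le_def.mp le_sup_left ((hbe z w).mpr h)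

lemma meet_char {x y : Setoid Z} {Px Py Q : ℕ → ℕ → Prop}
    (hxc : ∀ z w, x z w ↔ Px (pos z) (pos w)) (hyc : ∀ z w, y z w ↔ Py (pos z) (pos w))
    (himp : ∀ m n, m ≤ 2 * k → n ≤ 2 * k → (Px m n ∧ Py m n ↔ Q m n)) :
    ∀ z w, (x ⊓ y) z w ↔ Q (pos z) (pos w) := fun z w => by
  have h := Setoid.inf_iff_and (r := x) (s := y) (x := z) (y := w)
  rw [hxc, hyc] at h
  exact h.trans (himp _ _ (hp1 z) (hp1 w))

lemma char_atom {x : Setoid Z} {u v : ℕ} (hu : u ≤ 2 * k) (hv : v ≤ 2 * k)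
    (hc : ∀ z w, x z w ↔ (pos z = pos w ∨ (pos z = u ∧ pos w = v) ∨ (pos z = v ∧ pos w = u))) :
    x = equ (pt a b u) (pt a b v) := by
  have e1 : ∀ (m : ℕ), m ≤ 2 * k → ∀ z : Z, pos z = m ↔ z = pt a b m := fun m hm z =>
    ⟨fun h => by rw [← hp2 z, h], fun h => by rw [h, pos_pt hinj hp1 hp2 hm]⟩
  refine Setoid.ext fun z w => ?_
  rw [hc, equ_apply]
  constructor
  · rintro (h | ⟨h1, h2⟩ | ⟨h1, h2⟩)
    · exact Or.inl (eq_of_pos_eq hinj hp1 hp2 h)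
    · exact Or.inr (Or.inl ⟨(e1 u hu z).mp h1, (e1 v hv w).mp h2⟩)
    · exact Or.inr (Or.inr ⟨(e1 v hv z).mp h1, (e1 u hu w).mp h2⟩)
  · rintro (h | ⟨h1, h2⟩ | ⟨h1, h2⟩)
    · exact Or.inl (by rw [h])
    · exact Or.inr (Or.inl ⟨(e1 u hu z).mpr h1, (e1 v hv w).mpr h2⟩)
    · exact Or.inr (Or.inr ⟨(e1 v hv z).mpr h1, (e1 u hu w).mpr h2⟩)

end chars
end Zadori

/-- Zádori's configuration: the four equivalences α, β, γ, δ generate Equ(Z) for the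
(2k+1)-element set Z = {a₀,…,a_k, b₀,…,b_{k-1}}. -/
theorem zadori_generates {Z : Type*} {k : ℕ} (hk : 2 ≤ k) (a b : ℕ → Z)
    (ha : ∀ i j, i ≤ k → j ≤ k → a i = a j → i = j)
    (hb : ∀ i j, i < k → j < k → b i = b j → i = j)
    (hab : ∀ i j, i ≤ k → j < k → a i ≠ b j)
    (hZ : ∀ z : Z, (∃ i ≤ k, z = a i) ∨ ∃ j < k, z = b j) :
    Generates ({(⨆ i ∈ Finset.range k, equ (a i) (a (i + 1))) ⊔
          ⨆ i ∈ Finset.range (k - 1), equ (b i) (b (i + 1)),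
        ⨆ i ∈ Finset.range k, equ (a i) (b i),
        ⨆ i ∈ Finset.range k, equ (a (i + 1)) (b i),
        equ (a 0) (b 0) ⊔ equ (a k) (b (k - 1))} : Set (Setoid Z)) := by
  classical
  have hZ' : ∀ z : Z, ∃ m, m ≤ 2 * k ∧ pt a b m = z := by
    intro z
    rcases hZ z with ⟨i, hi, rfl⟩ | ⟨j, hj, rfl⟩
    · exact ⟨2 * i, by omega, pt_even a b i⟩
    · exact ⟨2 * j + 1, by omega, pt_odd a b j⟩
  choose pos hp1 hp2 using hZ'
  have hinj : ∀ m n, m ≤ 2 * k → n ≤ 2 * k → pt a b m = pt a b n → m = n := by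
    intro m n hm hn h
    rcases Nat.even_or_odd m with ⟨i, rfl⟩ | ⟨i, rfl⟩ <;>
      rcases Nat.even_or_odd n with ⟨j, rfl⟩ | ⟨j, rfl⟩
    · rw [show i + i = 2 * i from by omega, show j + j = 2 * j from by omega,
        pt_even, pt_even] at h
      have := ha i j (by omega) (by omega) h; omega
    · rw [show i + i = 2 * i from by omega, pt_even, pt_odd] at h
      exact absurd h (hab i j (by omega) (by omega))
    · rw [show j + j = 2 * j from by omega, pt_odd, pt_even] at h
      exact absurd h.symm (hab j i (by omega) (by omega))
    · rw [pt_odd, pt_odd] at h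
      have := hb i j (by omega) (by omega) h; omega
  set al := (⨆ i ∈ Finset.range k, equ (a i) (a (i + 1))) ⊔
      ⨆ i ∈ Finset.range (k - 1), equ (b i) (b (i + 1)) with hal
  set be := ⨆ i ∈ Finset.range k, equ (a i) (b i) with hbe'
  set ga := ⨆ i ∈ Finset.range k, equ (a (i + 1)) (b i) with hga'
  set de := equ (a 0) (b 0) ⊔ equ (a k) (b (k - 1)) with hde'
  unfold Generates
  rw [Set.eq_univ_iff_forall]
  intro t
  set cl := latticeClosure ({al, be, ga, de} : Set (Setoid Z)) with hcl
  have supc : ∀ {x y : Setoid Z}, x ∈ cl → y ∈ cl → x ⊔ y ∈ cl :=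
    fun hx hy => isSublattice_latticeClosure.supClosed hx hy
  have infc : ∀ {x y : Setoid Z}, x ∈ cl → y ∈ cl → x ⊓ y ∈ cl :=
    fun hx hy => isSublattice_latticeClosure.infClosed hx hy
  have halm : al ∈ cl := subset_latticeClosure (by simp)
  have hbem : be ∈ cl := subset_latticeClosure (by simp)
  have hgam : ga ∈ cl := subset_latticeClosure (by simp)
  have hdem : de ∈ cl := subset_latticeClosure (by simp)
  have hαc := alpha_char (k := k) (a := a) (b := b) (pos := pos) hinj hp1 hp2
  have hβc := beta_char (k := k) (a := a) (b := b) (pos := pos) hinj hp1 hp2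
  have hγc := gamma_char (k := k) (a := a) (b := b) (pos := pos) hinj hp1 hp2
  have hδc := delta_char (k := k) (a := a) (b := b) (pos := pos) hinj hp1 hp2 hk
  -- the left ladder
  have hA0 : ∃ x ∈ cl, ∀ z w, x z w ↔ (pos z = pos w ∨
      (pos z % 2 = 0 ∧ pos w % 2 = 0 ∧ pos z ≤ 2 * 0 + 2 ∧ pos w ≤ 2 * 0 + 2) ∨
      (pos z % 2 = 1 ∧ pos w % 2 = 1 ∧ pos z ≤ 2 * 0 + 1 ∧ pos w ≤ 2 * 0 + 1)) :=
    ⟨al ⊓ (ga ⊔ de), infc halm (supc hgam hdem),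
      meet_char hinj hp1 hp2 (Px := fun m n => m % 2 = n % 2)
        (Py := fun m n => (m ≤ 2 ∧ n ≤ 2) ∨ (m + 1) / 2 = (n + 1) / 2)
        (Q := fun m n => m = n ∨
          (m % 2 = 0 ∧ n % 2 = 0 ∧ m ≤ 2 * 0 + 2 ∧ n ≤ 2 * 0 + 2) ∨
          (m % 2 = 1 ∧ n % 2 = 1 ∧ m ≤ 2 * 0 + 1 ∧ n ≤ 2 * 0 + 1))
        hαc (char_gd hinj hp1 hp2 hk) (by intro m n hm hn; omega)⟩
  have stepSLo : ∀ i, i + 2 ≤ k →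
      (∃ x ∈ cl, ∀ z w, x z w ↔ (pos z = pos w ∨
        (pos z % 2 = 0 ∧ pos w % 2 = 0 ∧ pos z ≤ 2 * i + 2 ∧ pos w ≤ 2 * i + 2) ∨
        (pos z % 2 = 1 ∧ pos w % 2 = 1 ∧ pos z ≤ 2 * i + 1 ∧ pos w ≤ 2 * i + 1))) →
      ∃ x ∈ cl, ∀ z w, x z w ↔ (pos z = pos w ∨
        (pos z % 2 = 0 ∧ pos w % 2 = 0 ∧ pos z ≤ 2 * i + 2 ∧ pos w ≤ 2 * i + 2) ∨
        (pos z % 2 = 1 ∧ pos w % 2 = 1 ∧ pos z ≤ 2 * i + 3 ∧ pos w ≤ 2 * i + 3)) := by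
    rintro i hi ⟨x, hxcl, hxc⟩
    exact ⟨al ⊓ (be ⊔ x), infc halm (supc hbem hxcl),
      meet_char hinj hp1 hp2 (Px := fun m n => m % 2 = n % 2)
        (Py := fun m n => (m ≤ 2 * i + 3 ∧ n ≤ 2 * i + 3) ∨ m / 2 = n / 2)
        (Q := fun m n => m = n ∨
          (m % 2 = 0 ∧ n % 2 = 0 ∧ m ≤ 2 * i + 2 ∧ n ≤ 2 * i + 2) ∨
          (m % 2 = 1 ∧ n % 2 = 1 ∧ m ≤ 2 * i + 3 ∧ n ≤ 2 * i + 3))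
        hαc (char_b_SLe hinj hp1 hp2 i hi x hxc)
        (by intro m n hm hn; omega)⟩
  have stepSLe : ∀ i, i + 2 ≤ k →
      (∃ x ∈ cl, ∀ z w, x z w ↔ (pos z = pos w ∨
        (pos z % 2 = 0 ∧ pos w % 2 = 0 ∧ pos z ≤ 2 * i + 2 ∧ pos w ≤ 2 * i + 2) ∨
        (pos z % 2 = 1 ∧ pos w % 2 = 1 ∧ pos z ≤ 2 * i + 3 ∧ pos w ≤ 2 * i + 3))) →
      ∃ x ∈ cl, ∀ z w, x z w ↔ (pos z = pos w ∨
        (pos z % 2 = 0 ∧ pos w % 2 = 0 ∧ pos z ≤ 2 * (i + 1) + 2 ∧ pos w ≤ 2 * (i + 1) + 2) ∨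
        (pos z % 2 = 1 ∧ pos w % 2 = 1 ∧ pos z ≤ 2 * (i + 1) + 1 ∧ pos w ≤ 2 * (i + 1) + 1)) := by
    rintro i hi ⟨x, hxcl, hxc⟩
    exact ⟨al ⊓ (ga ⊔ x), infc halm (supc hgam hxcl),
      meet_char hinj hp1 hp2 (Px := fun m n => m % 2 = n % 2)
        (Py := fun m n => (m ≤ 2 * i + 4 ∧ n ≤ 2 * i + 4) ∨ (m + 1) / 2 = (n + 1) / 2)
        (Q := fun m n => m = n ∨
          (m % 2 = 0 ∧ n % 2 = 0 ∧ m ≤ 2 * (i + 1) + 2 ∧ n ≤ 2 * (i + 1) + 2) ∨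
          (m % 2 = 1 ∧ n % 2 = 1 ∧ m ≤ 2 * (i + 1) + 1 ∧ n ≤ 2 * (i + 1) + 1))
        hαc (char_g_SLo hinj hp1 hp2 i hi x hxc)
        (by intro m n hm hn; omega)⟩
  have HSLe : ∀ i, i + 1 ≤ k → ∃ x ∈ cl, ∀ z w, x z w ↔ (pos z = pos w ∨
      (pos z % 2 = 0 ∧ pos w % 2 = 0 ∧ pos z ≤ 2 * i + 2 ∧ pos w ≤ 2 * i + 2) ∨
      (pos z % 2 = 1 ∧ pos w % 2 = 1 ∧ pos z ≤ 2 * i + 1 ∧ pos w ≤ 2 * i + 1)) := by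
    intro i
    induction i with
    | zero => intro _; exact hA0
    | succ n ih => intro hn; exact stepSLe n (by omega) (stepSLo n (by omega) (ih (by omega)))
  have HSLo : ∀ i, i + 2 ≤ k → ∃ x ∈ cl, ∀ z w, x z w ↔ (pos z = pos w ∨
      (pos z % 2 = 0 ∧ pos w % 2 = 0 ∧ pos z ≤ 2 * i + 2 ∧ pos w ≤ 2 * i + 2) ∨
      (pos z % 2 = 1 ∧ pos w % 2 = 1 ∧ pos z ≤ 2 * i + 3 ∧ pos w ≤ 2 * i + 3)) :=
    fun i hi => stepSLo i hi (HSLe i (by omega))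
  -- the right ladder
  have hRbase : ∃ x ∈ cl, ∀ z w, x z w ↔ (pos z = pos w ∨
      (pos z % 2 = 0 ∧ pos w % 2 = 0 ∧ 2 * (k - 2) + 2 ≤ pos z ∧ 2 * (k - 2) + 2 ≤ pos w) ∨
      (pos z % 2 = 1 ∧ pos w % 2 = 1 ∧ 2 * (k - 2) + 3 ≤ pos z ∧ 2 * (k - 2) + 3 ≤ pos w)) :=
    ⟨al ⊓ (be ⊔ de), infc halm (supc hbem hdem),
      meet_char hinj hp1 hp2 (Px := fun m n => m % 2 = n % 2)
        (Py := fun m n => (2 * k - 2 ≤ m ∧ 2 * k - 2 ≤ n) ∨ m / 2 = n / 2)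
        (Q := fun m n => m = n ∨
          (m % 2 = 0 ∧ n % 2 = 0 ∧ 2 * (k - 2) + 2 ≤ m ∧ 2 * (k - 2) + 2 ≤ n) ∨
          (m % 2 = 1 ∧ n % 2 = 1 ∧ 2 * (k - 2) + 3 ≤ m ∧ 2 * (k - 2) + 3 ≤ n))
        hαc (char_bd hinj hp1 hp2 hk) (by intro m n hm hn; omega)⟩
  have stepSRe : ∀ i, i + 2 ≤ k →
      (∃ x ∈ cl, ∀ z w, x z w ↔ (pos z = pos w ∨
        (pos z % 2 = 0 ∧ pos w % 2 = 0 ∧ 2 * i + 2 ≤ pos z ∧ 2 * i + 2 ≤ pos w) ∨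
        (pos z % 2 = 1 ∧ pos w % 2 = 1 ∧ 2 * i + 3 ≤ pos z ∧ 2 * i + 3 ≤ pos w))) →
      ∃ x ∈ cl, ∀ z w, x z w ↔ (pos z = pos w ∨
        (pos z % 2 = 0 ∧ pos w % 2 = 0 ∧ 2 * i + 2 ≤ pos z ∧ 2 * i + 2 ≤ pos w) ∨
        (pos z % 2 = 1 ∧ pos w % 2 = 1 ∧ 2 * i + 1 ≤ pos z ∧ 2 * i + 1 ≤ pos w)) := by
    rintro i hi ⟨x, hxcl, hxc⟩
    exact ⟨al ⊓ (ga ⊔ x), infc halm (supc hgam hxcl),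
      meet_char hinj hp1 hp2 (Px := fun m n => m % 2 = n % 2)
        (Py := fun m n => (2 * i + 1 ≤ m ∧ 2 * i + 1 ≤ n) ∨ (m + 1) / 2 = (n + 1) / 2)
        (Q := fun m n => m = n ∨
          (m % 2 = 0 ∧ n % 2 = 0 ∧ 2 * i + 2 ≤ m ∧ 2 * i + 2 ≤ n) ∨
          (m % 2 = 1 ∧ n % 2 = 1 ∧ 2 * i + 1 ≤ m ∧ 2 * i + 1 ≤ n))
        hαc (char_g_SRo hinj hp1 hp2 i hi x hxc)
        (by intro m n hm hn; omega)⟩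
  have stepSRo : ∀ i, i + 3 ≤ k →
      (∃ x ∈ cl, ∀ z w, x z w ↔ (pos z = pos w ∨
        (pos z % 2 = 0 ∧ pos w % 2 = 0 ∧ 2 * (i + 1) + 2 ≤ pos z ∧ 2 * (i + 1) + 2 ≤ pos w) ∨
        (pos z % 2 = 1 ∧ pos w % 2 = 1 ∧ 2 * (i + 1) + 1 ≤ pos z ∧ 2 * (i + 1) + 1 ≤ pos w))) →
      ∃ x ∈ cl, ∀ z w, x z w ↔ (pos z = pos w ∨
        (pos z % 2 = 0 ∧ pos w % 2 = 0 ∧ 2 * i + 2 ≤ pos z ∧ 2 * i + 2 ≤ pos w) ∨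
        (pos z % 2 = 1 ∧ pos w % 2 = 1 ∧ 2 * i + 3 ≤ pos z ∧ 2 * i + 3 ≤ pos w)) := by
    rintro i hi ⟨x, hxcl, hxc⟩
    exact ⟨al ⊓ (be ⊔ x), infc halm (supc hbem hxcl),
      meet_char hinj hp1 hp2 (Px := fun m n => m % 2 = n % 2)
        (Py := fun m n => (2 * (i + 1) ≤ m ∧ 2 * (i + 1) ≤ n) ∨ m / 2 = n / 2)
        (Q := fun m n => m = n ∨
          (m % 2 = 0 ∧ n % 2 = 0 ∧ 2 * i + 2 ≤ m ∧ 2 * i + 2 ≤ n) ∨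
          (m % 2 = 1 ∧ n % 2 = 1 ∧ 2 * i + 3 ≤ m ∧ 2 * i + 3 ≤ n))
        hαc (char_b_SRe hinj hp1 hp2 (i + 1) (by omega) x hxc)
        (by intro m n hm hn; omega)⟩
  have HSRo : ∀ d i, i + 2 ≤ k → i + 2 + d = k → ∃ x ∈ cl, ∀ z w, x z w ↔ (pos z = pos w ∨
      (pos z % 2 = 0 ∧ pos w % 2 = 0 ∧ 2 * i + 2 ≤ pos z ∧ 2 * i + 2 ≤ pos w) ∨
      (pos z % 2 = 1 ∧ pos w % 2 = 1 ∧ 2 * i + 3 ≤ pos z ∧ 2 * i + 3 ≤ pos w)) := by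
    intro d
    induction d with
    | zero =>
      intro i hi hd
      obtain rfl : i = k - 2 := by omega
      exact hRbase
    | succ n ih =>
      intro i hi hd
      exact stepSRo i (by omega) (stepSRe (i + 1) (by omega) (ih (i + 1) (by omega) (by omega)))
  have HSRo' : ∀ i, i + 2 ≤ k → ∃ x ∈ cl, ∀ z w, x z w ↔ (pos z = pos w ∨
      (pos z % 2 = 0 ∧ pos w % 2 = 0 ∧ 2 * i + 2 ≤ pos z ∧ 2 * i + 2 ≤ pos w) ∨
      (pos z % 2 = 1 ∧ pos w % 2 = 1 ∧ 2 * i + 3 ≤ pos z ∧ 2 * i + 3 ≤ pos w)) :=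
    fun i hi => HSRo (k - 2 - i) i hi (by omega)
  have HSRe : ∀ i, i + 2 ≤ k → ∃ x ∈ cl, ∀ z w, x z w ↔ (pos z = pos w ∨
      (pos z % 2 = 0 ∧ pos w % 2 = 0 ∧ 2 * i + 2 ≤ pos z ∧ 2 * i + 2 ≤ pos w) ∨
      (pos z % 2 = 1 ∧ pos w % 2 = 1 ∧ 2 * i + 1 ≤ pos z ∧ 2 * i + 1 ≤ pos w)) :=
    fun i hi => stepSRe i hi (HSRo' i hi)
  -- the atoms A_i = equ (a i) (a (i+1))  (positions 2i, 2i+2)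
  have hAi : ∀ i, i + 1 ≤ k → ∃ x ∈ cl, ∀ z w, x z w ↔ (pos z = pos w ∨
      (pos z = 2 * i ∧ pos w = 2 * i + 2) ∨ (pos z = 2 * i + 2 ∧ pos w = 2 * i)) := by
    intro i hi
    rcases (by omega : i = 0 ∨ (i = k - 1 ∧ 1 ≤ i) ∨ (1 ≤ i ∧ i + 2 ≤ k))
      with rfl | ⟨hik, h1⟩ | ⟨h1, h2⟩
    · exact ⟨al ⊓ (ga ⊔ de), infc halm (supc hgam hdem),
        meet_char hinj hp1 hp2 (Px := fun m n => m % 2 = n % 2)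
          (Py := fun m n => (m ≤ 2 ∧ n ≤ 2) ∨ (m + 1) / 2 = (n + 1) / 2)
          (Q := fun m n => m = n ∨ (m = 2 * 0 ∧ n = 2 * 0 + 2) ∨ (m = 2 * 0 + 2 ∧ n = 2 * 0))
          hαc (char_gd hinj hp1 hp2 hk) (by intro m n hm hn; omega)⟩
    · refine ⟨al ⊓ (be ⊔ de), infc halm (supc hbem hdem),
        meet_char hinj hp1 hp2 (Px := fun m n => m % 2 = n % 2)
          (Py := fun m n => (2 * k - 2 ≤ m ∧ 2 * k - 2 ≤ n) ∨ m / 2 = n / 2)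
          (Q := fun m n => m = n ∨ (m = 2 * i ∧ n = 2 * i + 2) ∨ (m = 2 * i + 2 ∧ n = 2 * i))
          hαc (char_bd hinj hp1 hp2 hk) ?_⟩
      subst hik
      intro m n hm hn; omega
    · obtain ⟨xL, hxLcl, hxLc⟩ := HSLo (i - 1) (by omega)
      rw [show 2 * (i - 1) + 2 = 2 * i from by omega,
        show 2 * (i - 1) + 3 = 2 * i + 1 from by omega] at hxLc
      obtain ⟨xR, hxRcl, hxRc⟩ := HSRe i h2
      refine ⟨al ⊓ ((ga ⊔ xL) ⊓ (be ⊔ xR)),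
        infc halm (infc (supc hgam hxLcl) (supc hbem hxRcl)), ?_⟩
      have hin := meet_char hinj hp1 hp2
        (Px := fun m n => (m ≤ 2 * i + 2 ∧ n ≤ 2 * i + 2) ∨ (m + 1) / 2 = (n + 1) / 2)
        (Py := fun m n => (2 * i ≤ m ∧ 2 * i ≤ n) ∨ m / 2 = n / 2)
        (Q := fun m n => ((m ≤ 2 * i + 2 ∧ n ≤ 2 * i + 2) ∨ (m + 1) / 2 = (n + 1) / 2) ∧
          ((2 * i ≤ m ∧ 2 * i ≤ n) ∨ m / 2 = n / 2))
        (char_g_SLe2 hinj hp1 hp2 i h1 (by omega) xL hxLc)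
        (char_b_SRe hinj hp1 hp2 i h2 xR hxRc)
        (fun m n _ _ => Iff.rfl)
      exact meet_char hinj hp1 hp2 (Px := fun m n => m % 2 = n % 2)
        (Py := fun m n => ((m ≤ 2 * i + 2 ∧ n ≤ 2 * i + 2) ∨ (m + 1) / 2 = (n + 1) / 2) ∧
          ((2 * i ≤ m ∧ 2 * i ≤ n) ∨ m / 2 = n / 2))
        (Q := fun m n => m = n ∨ (m = 2 * i ∧ n = 2 * i + 2) ∨ (m = 2 * i + 2 ∧ n = 2 * i))
        hαc hin (by intro m n hm hn; omega)
  -- the atoms B_i = equ (b i) (b (i+1))  (positions 2i+1, 2i+3)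
  have hBi : ∀ i, i + 2 ≤ k → ∃ x ∈ cl, ∀ z w, x z w ↔ (pos z = pos w ∨
      (pos z = 2 * i + 1 ∧ pos w = 2 * i + 3) ∨ (pos z = 2 * i + 3 ∧ pos w = 2 * i + 1)) := by
    intro i hi
    obtain ⟨xL, hxLcl, hxLc⟩ := HSLe i (by omega)
    obtain ⟨xR, hxRcl, hxRc⟩ := HSRo' i hi
    refine ⟨al ⊓ ((be ⊔ xL) ⊓ (ga ⊔ xR)),
      infc halm (infc (supc hbem hxLcl) (supc hgam hxRcl)), ?_⟩
    have hin := meet_char hinj hp1 hp2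
      (Px := fun m n => (m ≤ 2 * i + 3 ∧ n ≤ 2 * i + 3) ∨ m / 2 = n / 2)
      (Py := fun m n => (2 * i + 1 ≤ m ∧ 2 * i + 1 ≤ n) ∨ (m + 1) / 2 = (n + 1) / 2)
      (Q := fun m n => ((m ≤ 2 * i + 3 ∧ n ≤ 2 * i + 3) ∨ m / 2 = n / 2) ∧
        ((2 * i + 1 ≤ m ∧ 2 * i + 1 ≤ n) ∨ (m + 1) / 2 = (n + 1) / 2))
      (char_b_SLe hinj hp1 hp2 i hi xL hxLc)
      (char_g_SRo hinj hp1 hp2 i hi xR hxRc)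
      (fun m n _ _ => Iff.rfl)
    exact meet_char hinj hp1 hp2 (Px := fun m n => m % 2 = n % 2)
      (Py := fun m n => ((m ≤ 2 * i + 3 ∧ n ≤ 2 * i + 3) ∨ m / 2 = n / 2) ∧
        ((2 * i + 1 ≤ m ∧ 2 * i + 1 ≤ n) ∨ (m + 1) / 2 = (n + 1) / 2))
      (Q := fun m n => m = n ∨ (m = 2 * i + 1 ∧ n = 2 * i + 3) ∨ (m = 2 * i + 3 ∧ n = 2 * i + 1))
      hαc hin (by intro m n hm hn; omega)
  -- p_i = equ (a i) (b i)  (positions 2i, 2i+1)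
  have hpi : ∀ i, i + 1 ≤ k → ∃ x ∈ cl, ∀ z w, x z w ↔ (pos z = pos w ∨
      (pos z = 2 * i ∧ pos w = 2 * i + 1) ∨ (pos z = 2 * i + 1 ∧ pos w = 2 * i)) := by
    intro i hi
    obtain ⟨xA, hxAcl, hxAc⟩ := hAi i hi
    exact ⟨be ⊓ (ga ⊔ xA), infc hbem (supc hgam hxAcl),
      meet_char hinj hp1 hp2
        (Px := fun m n => m / 2 = n / 2)
        (Py := fun m n => ((2 * i - 1 ≤ m ∧ m ≤ 2 * i + 2) ∧ (2 * i - 1 ≤ n ∧ n ≤ 2 * i + 2)) ∨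
          (m + 1) / 2 = (n + 1) / 2)
        (Q := fun m n => m = n ∨ (m = 2 * i ∧ n = 2 * i + 1) ∨ (m = 2 * i + 1 ∧ n = 2 * i))
        hβc (char_g_atom hinj hp1 hp2 i hi xA hxAc)
        (by intro m n hm hn; omega)⟩
  -- q_i = equ (a (i+1)) (b i)  (positions 2i+1, 2i+2)
  have hqi : ∀ i, i + 1 ≤ k → ∃ x ∈ cl, ∀ z w, x z w ↔ (pos z = pos w ∨
      (pos z = 2 * i + 1 ∧ pos w = 2 * i + 2) ∨ (pos z = 2 * i + 2 ∧ pos w = 2 * i + 1)) := by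
    intro i hi
    obtain ⟨xA, hxAcl, hxAc⟩ := hAi i hi
    exact ⟨ga ⊓ (be ⊔ xA), infc hgam (supc hbem hxAcl),
      meet_char hinj hp1 hp2
        (Px := fun m n => (m + 1) / 2 = (n + 1) / 2)
        (Py := fun m n => ((2 * i ≤ m ∧ m ≤ 2 * i + 3) ∧ (2 * i ≤ n ∧ n ≤ 2 * i + 3)) ∨
          m / 2 = n / 2)
        (Q := fun m n => m = n ∨ (m = 2 * i + 1 ∧ n = 2 * i + 2) ∨ (m = 2 * i + 2 ∧ n = 2 * i + 1))
        hγc (char_b_atom hinj hp1 hp2 i hi xA hxAc)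
        (by intro m n hm hn; omega)⟩
  -- adjacent and distance-two atoms, in position form
  have hadj1 : ∀ m, m + 1 ≤ 2 * k → equ (pt a b m) (pt a b (m + 1)) ∈ cl := by
    intro m hm
    rcases Nat.even_or_odd m with ⟨i, rfl⟩ | ⟨i, rfl⟩
    · obtain ⟨x, hxcl, hxc⟩ := hpi i (by omega)
      rw [show i + i = 2 * i from by omega]
      rw [← char_atom hinj hp1 hp2 (u := 2 * i) (v := 2 * i + 1) (by omega) (by omega) hxc]
      exact hxcl
    · obtain ⟨x, hxcl, hxc⟩ := hqi i (by omega)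
      rw [show 2 * i + 1 + 1 = 2 * i + 2 from by omega]
      rw [← char_atom hinj hp1 hp2 (u := 2 * i + 1) (v := 2 * i + 2) (by omega) (by omega) hxc]
      exact hxcl
  have hadj2 : ∀ m, m + 2 ≤ 2 * k → equ (pt a b m) (pt a b (m + 2)) ∈ cl := by
    intro m hm
    rcases Nat.even_or_odd m with ⟨i, rfl⟩ | ⟨i, rfl⟩
    · obtain ⟨x, hxcl, hxc⟩ := hAi i (by omega)
      rw [show i + i = 2 * i from by omega]
      rw [← char_atom hinj hp1 hp2 (u := 2 * i) (v := 2 * i + 2) (by omega) (by omega) hxc]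
      exact hxcl
    · obtain ⟨x, hxcl, hxc⟩ := hBi i (by omega)
      rw [show 2 * i + 1 + 2 = 2 * i + 3 from by omega]
      rw [← char_atom hinj hp1 hp2 (u := 2 * i + 1) (v := 2 * i + 3) (by omega) (by omega) hxc]
      exact hxcl
  have hbot : (⊥ : Setoid Z) ∈ cl := by
    obtain ⟨x, hxcl, hxc⟩ := hpi 0 (by omega)
    obtain ⟨y, hycl, hyc⟩ := hqi 0 (by omega)
    have hxy : x ⊓ y = ⊥ := by
      refine Setoid.ext fun z w => ?_
      have h := Setoid.inf_iff_and (r := x) (s := y) (x := z) (y := w)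
      rw [hxc, hyc] at h
      refine h.trans ?_
      rw [show (⊥ : Setoid Z) z w ↔ z = w from by rw [Setoid.bot_def]]
      constructor
      · intro hzw
        exact eq_of_pos_eq hinj hp1 hp2 (by omega)
      · rintro rfl
        exact ⟨Or.inl rfl, Or.inl rfl⟩
    rw [← hxy]; exact infc hxcl hycl
  -- all atoms at distance d
  have hAll : ∀ d m, m + d ≤ 2 * k → equ (pt a b m) (pt a b (m + d)) ∈ cl := by
    intro d
    induction d using Nat.strong_induction_on with
    | _ d ih =>
      intro m hm
      rcases (by omega : d = 0 ∨ d = 1 ∨ d = 2 ∨ 3 ≤ d) with rfl | rfl | rfl | h3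
      · rw [show m + 0 = m from rfl, equ_self_eq_bot]; exact hbot
      · exact hadj1 m (by omega)
      · exact hadj2 m (by omega)
      · have hne : ∀ u v : ℕ, u ≤ 2 * k → v ≤ 2 * k → u ≠ v → pt a b u ≠ pt a b v :=
          fun u v hu hv huv h => huv (hinj u v hu hv h)
        rw [← zadori_midpoint (x := pt a b m) (y := pt a b (m + d))
          (u := pt a b (m + 1)) (v := pt a b (m + 2))
          (hne _ _ (by omega) (by omega) (by omega)) (hne _ _ (by omega) (by omega) (by omega))
          (hne _ _ (by omega) (by omega) (by omega)) (hne _ _ (by omega) (by omega) (by omega))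
          (hne _ _ (by omega) (by omega) (by omega))]
        have h1 : equ (pt a b (m + 1)) (pt a b (m + d)) ∈ cl := by
          have := ih (d - 1) (by omega) (m + 1) (by omega)
          rwa [show m + 1 + (d - 1) = m + d from by omega] at this
        have h2 : equ (pt a b (m + 2)) (pt a b (m + d)) ∈ cl := by
          have := ih (d - 2) (by omega) (m + 2) (by omega)
          rwa [show m + 2 + (d - 2) = m + d from by omega] at this
        exact infc (supc (hadj1 m (by omega)) h1) (supc (hadj2 m (by omega)) h2)
  have hatoms : ∀ z w : Z, equ z w ∈ cl := by
    intro z w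
    have hz := hp1 z
    have hw := hp1 w
    rcases le_total (pos z) (pos w) with h | h
    · have he : equ z w = equ (pt a b (pos z)) (pt a b (pos z + (pos w - pos z))) := by
        rw [show pos z + (pos w - pos z) = pos w from by omega, hp2, hp2]
      rw [he]; exact hAll _ _ (by omega)
    · have he : equ z w = equ (pt a b (pos w)) (pt a b (pos w + (pos z - pos w))) := by
        rw [show pos w + (pos z - pos w) = pos z from by omega, hp2, hp2]
        exact equ_comm z w
      rw [he]; exact hAll _ _ (by omega)
  -- conclude: every setoid is a finite sup of atoms
  haveI hfin : Finite Z := Finite.of_surjective (fun i : Fin (2 * k + 1) => pt a b i.val)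
    (fun z => ⟨⟨pos z, by have := hp1 z; omega⟩, hp2 z⟩)
  haveI hft : Fintype Z := Fintype.ofFinite Z
  have ht : t = (Finset.univ : Finset (Z × Z)).sup
      (fun p => if t p.1 p.2 then equ p.1 p.2 else ⊥) := by
    apply le_antisymm
    · refine Setoid.le_def.mpr fun {z w} h => ?_
      have hle : equ z w ≤ (Finset.univ : Finset (Z × Z)).sup
          (fun p => if t p.1 p.2 then equ p.1 p.2 else ⊥) := by
        have h2 : (if t z w then equ z w else ⊥) ≤ (Finset.univ : Finset (Z × Z)).sup
            (fun p => if t p.1 p.2 then equ p.1 p.2 else ⊥) :=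
          Finset.le_sup (f := fun p : Z × Z => if t p.1 p.2 then equ p.1 p.2 else ⊥)
            (Finset.mem_univ (z, w))
        rwa [if_pos h] at h2
      exact Setoid.le_def.mp hle (equ_self_rel z w)
    · refine Finset.sup_le fun p _ => ?_
      by_cases hp : t p.1 p.2
      · rw [if_pos hp]; exact equ_le_s15.mpr hp
      · rw [if_neg hp]; exact bot_le
  rw [ht]
  exact Finset.sup_induction hbot (fun x hx y hy => supc hx hy) (fun p _ => by
    by_cases hp : t p.1 p.2
    · rw [if_pos hp]; exact hatoms _ _
    · rw [if_neg hp]; exact hbot)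
end

section
/- For every integer n ≥ 5, the partition lattice Part(n) of all partitions of {1, 2, ..., n} is four-generated: there exists a four-element subset generating Part(n) as a lattice. -/
/-!
The generators are the two matchings of the path `0 - 1 - ⋯ - (n-1)` (blocks `{2k, 2k+1}`,
resp. `{2k-1, 2k}`) and the two parity classes. Meeting the parity class of `m` with the join of
the matching containing `{m, m+1}` and the block `{v ≡ m+1 (mod 2), v ≤ m+1}` gives the block
`{v ≡ m, v ≤ m}`; descending from the whole parity class of `n - 1` this reaches `{0, 2}`, and
then the atom `{0, 1}`. An atom `{j, j+1}` joined with the parity class of `j` and met with the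
matching containing `{j+1, j+2}` gives the next atom `{j+1, j+2}`. Longer atoms come from shorter
ones: `{a, b}` is what the blocks `{a, p, b}` and `{a, q, b}` share when `p ≠ q`. Finally every
partition is the join of the atoms below it.
-/

open Set

namespace Setoid

variable {α : Type*}

def singleBlock (s : Set α) : Setoid α where
  r x y := x = y ∨ x ∈ s ∧ y ∈ s
  iseqv :=
    { refl := fun _ => Or.inl rfl
      symm := by rintro x y (rfl | ⟨hx, hy⟩) <;> tauto
      trans := by rintro x y z (rfl | ⟨hx, hy⟩) (rfl | ⟨hy', hz⟩) <;> tauto }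

theorem singleBlock_iff {s : Set α} {x y : α} :
    singleBlock s x y ↔ x = y ∨ x ∈ s ∧ y ∈ s :=
  Iff.rfl

theorem singleBlock_mono {s t : Set α} (h : s ⊆ t) : singleBlock s ≤ singleBlock t :=
  le_def.mpr <| Or.imp_right <| And.imp (@h _) (@h _)

theorem singleBlock_inf (s t : Set α) :
    singleBlock s ⊓ singleBlock t = singleBlock (s ∩ t) := by
  ext x y
  simp only [inf_iff_and, singleBlock_iff, mem_inter_iff]
  tauto

theorem singleBlock_sup {s t : Set α} (h : (s ∩ t).Nonempty) :
    singleBlock s ⊔ singleBlock t = singleBlock (s ∪ t) := by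
  obtain ⟨c, hcs, hct⟩ := h
  refine le_antisymm (sup_le (singleBlock_mono subset_union_left)
    (singleBlock_mono subset_union_right)) (le_def.mpr ?_)
  have to_c : ∀ z ∈ s ∪ t, (singleBlock s ⊔ singleBlock t) z c := by
    rintro z (hz | hz)
    · exact le_def.mp le_sup_left (Or.inr ⟨hz, hcs⟩)
    · exact le_def.mp le_sup_right (Or.inr ⟨hz, hct⟩)
  rintro x y (rfl | ⟨hx, hy⟩)
  · exact refl' _ x
  · exact trans' _ (to_c x hx) (symm' _ (to_c y hy))

theorem sup_singleBlock_iff {r : Setoid α} {s : Set α} {x y : α} :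
    (r ⊔ singleBlock s) x y ↔ r x y ∨ (∃ x' ∈ s, r x x') ∧ ∃ y' ∈ s, r y y' := by
  let R : Setoid α :=
    { r x y := r x y ∨ (∃ x' ∈ s, r x x') ∧ ∃ y' ∈ s, r y y'
      iseqv :=
        { refl := fun x => Or.inl (r.refl' x)
          symm := Or.imp r.symm' And.symm
          trans := by
            rintro x y z (hxy | ⟨hx, y', hy', hyy'⟩) (hyz | ⟨⟨y'', hy'', hyy''⟩, hz⟩)
            · exact Or.inl (r.trans' hxy hyz)
            · exact Or.inr ⟨⟨y'', hy'', r.trans' hxy hyy''⟩, hz⟩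
            · exact Or.inr ⟨hx, y', hy', r.trans' (r.symm' hyz) hyy'⟩
            · exact Or.inr ⟨hx, hz⟩ } }
  constructor
  · refine fun h => le_def.mp (sup_le (le_def.mpr Or.inl) (le_def.mpr ?_) : _ ≤ R) h
    rintro x y (rfl | ⟨hx, hy⟩)
    · exact Or.inl (r.refl' x)
    · exact Or.inr ⟨⟨x, hx, r.refl' x⟩, y, hy, r.refl' y⟩
  · rintro (h | ⟨⟨x', hx', hxx'⟩, y', hy', hyy'⟩)
    · exact le_def.mp le_sup_left h
    · exact trans' _ (le_def.mp le_sup_left hxx') <| trans' _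
        (le_def.mp le_sup_right (Or.inr ⟨hx', hy'⟩)) (le_def.mp le_sup_left (r.symm' hyy'))

end Setoid

section Equ

variable {α : Type*}

theorem equ_rel (a b : α) : equ a b a b :=
  Relation.EqvGen.rel a b ⟨rfl, rfl⟩

theorem equ_le_iff {a b : α} {s : Setoid α} : equ a b ≤ s ↔ s a b :=
  ⟨fun h => Setoid.le_def.mp h (equ_rel a b),
    fun h => Setoid.eqvGen_le (by rintro x y ⟨rfl, rfl⟩; exact h)⟩

theorem equ_eq_singleBlock (a b : α) : equ a b = Setoid.singleBlock {a, b} := by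
  refine le_antisymm (Setoid.eqvGen_le ?_) (Setoid.le_def.mpr ?_)
  · rintro x y ⟨rfl, rfl⟩
    exact Or.inr ⟨mem_insert x _, mem_insert_of_mem x rfl⟩
  · have hab := equ_rel a b
    rintro x y (rfl | ⟨hx | hx, hy | hy⟩) <;> subst_vars
    exacts [Setoid.refl' _ _, Setoid.refl' _ _, hab, Setoid.symm' _ hab, Setoid.refl' _ _]

theorem equ_comm_s16 (a b : α) : equ a b = equ b a := by
  rw [equ_eq_singleBlock, equ_eq_singleBlock, pair_comm]

theorem equ_eq_sup_inf_sup {a b p q : α} (hpq : p ≠ q) :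
    equ a b = (equ a p ⊔ equ p b) ⊓ (equ a q ⊔ equ q b) := by
  simp only [equ_eq_singleBlock]
  rw [Setoid.singleBlock_sup ⟨p, by simp⟩, Setoid.singleBlock_sup ⟨q, by simp⟩,
    Setoid.singleBlock_inf]
  congr 1
  ext x
  simp only [mem_insert_iff, mem_singleton_iff, mem_union, mem_inter_iff]
  constructor
  · tauto
  · rintro ⟨(h | h) | (h | h), (h' | h') | (h' | h')⟩ <;> subst_vars <;> tauto

theorem eq_univ_of_equ_mem [Finite α] {S : Set (Setoid α)} (hS : SupClosed S)
    (hbot : ⊥ ∈ S) (h : ∀ a b, a ≠ b → equ a b ∈ S) : S = univ := by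
  refine eq_univ_of_forall fun s => ?_
  let T := {t | ∃ a b, s a b ∧ a ≠ b ∧ t = equ a b}
  have hT : T.Finite := by
    refine (finite_range fun p : α × α => equ p.1 p.2).subset ?_
    rintro _ ⟨a, b, -, -, rfl⟩
    exact ⟨(a, b), rfl⟩
  have hs : s = sSup T := by
    refine le_antisymm (Setoid.le_def.mpr fun {x y} hxy => ?_) (sSup_le ?_)
    · by_cases hne : x = y
      · exact hne ▸ Setoid.refl' _ x
      · exact equ_le_iff.mp (le_sSup ⟨x, y, hxy, hne, rfl⟩)
    · rintro _ ⟨a, b, hab, -, rfl⟩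
      exact equ_le_iff.mpr hab
  rw [hs]
  exact hS.sSup_mem hT hbot (by rintro _ ⟨a, b, -, hab, rfl⟩; exact h a b hab)

end Equ

namespace PartitionLattice

open Setoid

variable {n : ℕ}

/-- `pairing n 0` has the blocks `{0, 1}, {2, 3}, …` and `pairing n 1` the blocks
`{0}, {1, 2}, {3, 4}, …`. -/
def pairing (n p : ℕ) : Setoid (Fin n) :=
  ker fun v => (v.val + p) / 2

def parityClass (n p : ℕ) : Setoid (Fin n) :=
  singleBlock {v | v.val % 2 = p % 2}

def parityPrefix (n m : ℕ) : Set (Fin n) :=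
  {v | v.val % 2 = m % 2 ∧ v.val ≤ m}

def gens (n : ℕ) : Set (Setoid (Fin n)) :=
  {pairing n 0, pairing n 1, parityClass n 0, parityClass n 1}

theorem pairing_iff {p : ℕ} {x y : Fin n} :
    pairing n p x y ↔ (x.val + p) / 2 = (y.val + p) / 2 :=
  Iff.rfl

theorem parityClass_iff {p : ℕ} {x y : Fin n} :
    parityClass n p x y ↔ x = y ∨ x.val % 2 = p % 2 ∧ y.val % 2 = p % 2 :=
  Iff.rfl

theorem pairing_mem (p : ℕ) : pairing n p ∈ latticeClosure (gens n) := by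
  have hp : pairing n p = pairing n (p % 2) := by
    ext x y
    simp only [pairing_iff]
    omega
  rw [hp]
  apply subset_latticeClosure
  rcases Nat.mod_two_eq_zero_or_one p with h | h <;> simp [gens, h]

theorem parityClass_mem (p : ℕ) : parityClass n p ∈ latticeClosure (gens n) := by
  rw [parityClass, ← Nat.mod_mod p, ← parityClass]
  apply subset_latticeClosure
  rcases Nat.mod_two_eq_zero_or_one p with h | h <;> simp [gens, h]

theorem singleBlock_parityPrefix_sub_one :
    singleBlock (parityPrefix n (n - 1)) = parityClass n (n - 1) := by
  rw [parityClass, parityPrefix]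
  congr 1
  ext v
  simp only [mem_ofPred_eq, and_iff_left_iff_imp]
  omega

theorem singleBlock_parityPrefix_eq_inf {m : ℕ} (hm : m + 1 < n) :
    singleBlock (parityPrefix n m) =
      parityClass n m ⊓ (pairing n m ⊔ singleBlock (parityPrefix n (m + 1))) := by
  have reach (x : Fin n) :
      (∃ x' ∈ parityPrefix n (m + 1), pairing n m x x') ↔ x.val ≤ m + 1 := by
    constructor
    · rintro ⟨x', ⟨-, hx'⟩, hxx'⟩
      rw [pairing_iff] at hxx'
      omega
    · intro hx
      by_cases hpar : x.val % 2 = (m + 1) % 2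
      · exact ⟨x, ⟨hpar, hx⟩, refl' _ x⟩
      · obtain ⟨x', hx'⟩ : ∃ x' : Fin n, x'.val = x.val + 1 :=
          ⟨⟨x.val + 1, by omega⟩, rfl⟩
        exact ⟨x', ⟨by omega, by omega⟩, by rw [pairing_iff]; omega⟩
  ext x y
  rw [inf_iff_and, sup_singleBlock_iff, reach, reach]
  simp only [parityClass_iff, singleBlock_iff, parityPrefix, pairing_iff, mem_ofPred_eq,
    Fin.ext_iff]
  omega

theorem pairing_inf_parityClass : pairing n 0 ⊓ parityClass n 0 = ⊥ := by
  ext x y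
  simp only [inf_iff_and, pairing_iff, parityClass_iff, bot_def, Fin.ext_iff]
  omega

section Atoms

variable {a b c : Fin n}

theorem equ_zero_two_eq (ha : a.val = 0) (hc : c.val = 2) :
    equ a c = singleBlock (parityPrefix n 2) := by
  rw [equ_eq_singleBlock]
  congr 1
  ext v
  simp only [mem_insert_iff, mem_singleton_iff, parityPrefix, mem_ofPred_eq, Fin.ext_iff]
  omega

theorem equ_zero_one_eq (ha : a.val = 0) (hb : b.val = 1) (hc : c.val = 2) :
    equ a b = pairing n 0 ⊓ (pairing n 1 ⊔ equ a c) := by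
  ext x y
  rw [inf_iff_and, equ_eq_singleBlock, equ_eq_singleBlock, sup_singleBlock_iff]
  simp only [singleBlock_iff, exists_eq_or_imp, mem_insert_iff, mem_singleton_iff,
    exists_eq_left, pairing_iff]
  simp only [Fin.ext_iff]
  omega

theorem equ_succ_succ_eq (hb : b.val = a.val + 1) (hc : c.val = b.val + 1) :
    equ b c = pairing n b ⊓ (parityClass n a ⊔ equ a b) := by
  rw [equ_eq_singleBlock, equ_eq_singleBlock, parityClass, singleBlock_sup]
  swap
  · exact ⟨a, rfl, mem_insert a _⟩
  ext x y
  simp only [inf_iff_and, singleBlock_iff, mem_union, mem_insert_iff, mem_singleton_iff,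
    mem_ofPred_eq, pairing_iff, Fin.ext_iff]
  omega

theorem equ_add_two_eq (hb : b.val = a.val + 1) (hc : c.val = b.val + 1) :
    equ a c = parityClass n a ⊓ (equ a b ⊔ equ b c) := by
  simp only [equ_eq_singleBlock, parityClass]
  rw [singleBlock_sup ⟨b, by simp⟩, singleBlock_inf]
  congr 1
  ext v
  simp only [mem_insert_iff, mem_singleton_iff, mem_union, mem_inter_iff, mem_ofPred_eq,
    Fin.ext_iff]
  omega

end Atoms

theorem singleBlock_parityPrefix_mem {m : ℕ} (hm : m < n) :
    singleBlock (parityPrefix n m) ∈ latticeClosure (gens n) := by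
  induction Nat.le_sub_one_of_lt hm using Nat.decreasingInduction with
  | self => rw [singleBlock_parityPrefix_sub_one]; exact parityClass_mem _
  | of_succ k hk ih =>
    rw [singleBlock_parityPrefix_eq_inf (by omega)]
    exact isSublattice_latticeClosure.infClosed (parityClass_mem k)
      (isSublattice_latticeClosure.supClosed (pairing_mem k) (ih (by omega)))

theorem equ_succ_mem (hn : 3 ≤ n) {a b : Fin n} (hb : b.val = a.val + 1) :
    equ a b ∈ latticeClosure (gens n) := by
  induction ha : a.val generalizing a b with
  | zero =>
    obtain ⟨c, hc⟩ : ∃ c : Fin n, c.val = 2 := ⟨⟨2, by omega⟩, rfl⟩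
    rw [equ_zero_one_eq ha (by omega) hc]
    refine isSublattice_latticeClosure.infClosed (pairing_mem 0)
      (isSublattice_latticeClosure.supClosed (pairing_mem 1) ?_)
    rw [equ_zero_two_eq ha hc]
    exact singleBlock_parityPrefix_mem (by omega)
  | succ j ih =>
    obtain ⟨a', ha'⟩ : ∃ a' : Fin n, a'.val = j := ⟨⟨j, by omega⟩, rfl⟩
    rw [equ_succ_succ_eq (a := a') (by omega) hb]
    exact isSublattice_latticeClosure.infClosed (pairing_mem _)
      (isSublattice_latticeClosure.supClosed (parityClass_mem _) (ih (by omega) ha'))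

theorem equ_mem_of_lt (hn : 3 ≤ n) {a b : Fin n} (hab : a < b) :
    equ a b ∈ latticeClosure (gens n) := by
  obtain ⟨d, hd⟩ : ∃ d, b.val = a.val + d := ⟨b.val - a.val, by omega⟩
  induction d using Nat.strong_induction_on generalizing a b with
  | _ d ih =>
    have shorter {e : ℕ} (he : e < d) (he0 : 0 < e) {x y : Fin n} (hxy : y.val = x.val + e) :
        equ x y ∈ latticeClosure (gens n) :=
      ih e he (Fin.lt_def.mpr (by omega)) hxy
    have hb := b.isLt
    rw [Fin.lt_def] at hab
    rcases d with _ | _ | _ | d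
    · omega
    · exact equ_succ_mem hn hd
    · obtain ⟨p, hp⟩ : ∃ p : Fin n, p.val = a.val + 1 := ⟨⟨a.val + 1, by omega⟩, rfl⟩
      rw [equ_add_two_eq (b := p) hp (by omega)]
      exact isSublattice_latticeClosure.infClosed (parityClass_mem _)
        (isSublattice_latticeClosure.supClosed (shorter (e := 1) (by omega) (by omega) (by omega))
          (shorter (e := 1) (by omega) (by omega) (by omega)))
    · obtain ⟨p, hp⟩ : ∃ p : Fin n, p.val = a.val + 1 := ⟨⟨a.val + 1, by omega⟩, rfl⟩
      obtain ⟨q, hq⟩ : ∃ q : Fin n, q.val = a.val + 2 := ⟨⟨a.val + 2, by omega⟩, rfl⟩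
      rw [equ_eq_sup_inf_sup (p := p) (q := q) (Fin.ne_of_val_ne (by omega))]
      exact isSublattice_latticeClosure.infClosed
        (isSublattice_latticeClosure.supClosed (shorter (e := 1) (by omega) (by omega) (by omega))
          (shorter (e := d + 2) (by omega) (by omega) (by omega)))
        (isSublattice_latticeClosure.supClosed (shorter (e := 2) (by omega) (by omega) (by omega))
          (shorter (e := d + 1) (by omega) (by omega) (by omega)))

theorem generates_gens (hn : 3 ≤ n) : Generates (gens n) := by
  refine eq_univ_of_equ_mem isSublattice_latticeClosure.supClosed ?_ fun a b hab => ?_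
  · rw [← pairing_inf_parityClass]
    exact isSublattice_latticeClosure.infClosed (pairing_mem 0) (parityClass_mem 0)
  · rcases hab.lt_or_gt with h | h
    · exact equ_mem_of_lt hn h
    · exact equ_comm_s16 b a ▸ equ_mem_of_lt hn h

theorem ncard_gens (hn : 4 ≤ n) : (gens n).ncard = 4 := by
  have sep {r s : Setoid (Fin n)} (i j : Fin 4) (hr : r (i.castLE hn) (j.castLE hn))
      (hs : ¬ s (i.castLE hn) (j.castLE hn)) : r ≠ s :=
    fun h => hs (h ▸ hr)
  rw [gens, ncard_insert_of_notMem, ncard_insert_of_notMem, ncard_pair]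
  · exact sep 0 2 (by simp [parityClass_iff]) (by simp [parityClass_iff])
  · simp only [mem_insert_iff, mem_singleton_iff, not_or]
    exact ⟨sep 1 2 (by simp [pairing_iff]) (by simp [parityClass_iff, Fin.ext_iff]),
      sep 1 2 (by simp [pairing_iff]) (by simp [parityClass_iff, Fin.ext_iff])⟩
  · simp only [mem_insert_iff, mem_singleton_iff, not_or]
    exact ⟨sep 0 1 (by simp [pairing_iff]) (by simp [pairing_iff]),
      sep 0 1 (by simp [pairing_iff]) (by simp [parityClass_iff, Fin.ext_iff]),
      sep 0 1 (by simp [pairing_iff]) (by simp [parityClass_iff, Fin.ext_iff])⟩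

end PartitionLattice

/-- For n ≥ 5 the partition lattice Part(n) ≅ Equ(n) is four-generated. -/
theorem part_four_generated {n : ℕ} (hn : 5 ≤ n) :
    ∃ G : Set (Setoid (Fin n)), G.ncard = 4 ∧ Generates G :=
  ⟨PartitionLattice.gens n, PartitionLattice.ncard_gens (by omega),
    PartitionLattice.generates_gens (by omega)⟩
end

section
/- Let A be a set partitioned into two nonempty blocks P and Q by an equivalence α' (i.e., the α'-blocks are exactly P and Q), let z ∈ P and w ∈ Q, and let ε ∈ Equ(A) be an equivalence with ε ≤ α' (every ε-block lies inside P or inside Q). If a pair (p, q) with p ∈ P, q ∈ Q belongs to the join ε + equ(z, w) in Equ(A), then (p, z) ∈ ε and (w, q) ∈ ε. -/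
lemma equ_cases {A : Type*} {a b x y : A} (h : equ a b x y) :
    x = y ∨ (x = a ∧ y = b) ∨ (x = b ∧ y = a) := by
  induction h with
  | rel x y h => exact Or.inr (Or.inl h)
  | refl x => exact Or.inl rfl
  | symm x y _ ih => tauto
  | trans x y z _ _ ih1 ih2 => rcases ih1 with h|⟨h1,h2⟩|⟨h1,h2⟩ <;>
      rcases ih2 with g|⟨g1,g2⟩|⟨g1,g2⟩ <;> subst_vars <;> tauto

/-- The 'passageway' lemma: if ε refines the two-block partition {P, Q} and z ∈ P, w ∈ Q,
then any pair (p,q) across the blocks that lies in ε + equ(z,w) forces (p,z) ∈ ε and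
(w,q) ∈ ε. -/
theorem passageway {A : Type*} (P Q : Set A) (hne1 : P.Nonempty) (hne2 : Q.Nonempty)
    (hdisj : Disjoint P Q) (hcov : P ∪ Q = Set.univ)
    (ε : Setoid A) (hε : ∀ x y, ε x y → (x ∈ P ∧ y ∈ P) ∨ (x ∈ Q ∧ y ∈ Q))
    (z w : A) (hz : z ∈ P) (hw : w ∈ Q)
    (p q : A) (hp : p ∈ P) (hq : q ∈ Q)
    (hpq : (ε ⊔ equ z w) p q) :
    ε p z ∧ ε w q := by
  have hPQ : ∀ x : A, x ∉ P → x ∈ Q := by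
    intro x hx
    have hx2 : x ∈ P ∪ Q := hcov ▸ Set.mem_univ x
    exact hx2.resolve_left hx
  have hnot : ∀ x : A, x ∈ P → x ∉ Q := fun x hx hx' =>
    Set.disjoint_left.mp hdisj hx hx'
  -- invariant
  set R : A → A → Prop := fun x y =>
    (x ∈ P ∧ y ∈ P ∧ ε x y) ∨ (x ∈ P ∧ y ∈ Q ∧ ε x z ∧ ε w y) ∨
    (x ∈ Q ∧ y ∈ P ∧ ε x w ∧ ε z y) ∨ (x ∈ Q ∧ y ∈ Q ∧ ε x y) with hR
  rw [Setoid.sup_eq_eqvGen] at hpq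
  have key : R p q := by
    clear hp hq
    induction hpq with
    | rel x y h =>
      rcases h with h | h
      · rcases hε x y h with ⟨h1, h2⟩ | ⟨h1, h2⟩
        · exact Or.inl ⟨h1, h2, h⟩
        · exact Or.inr (Or.inr (Or.inr ⟨h1, h2, h⟩))
      · rcases equ_cases h with rfl | ⟨h1, h2⟩ | ⟨h1, h2⟩
        · by_cases hx : x ∈ P
          · exact Or.inl ⟨hx, hx, ε.refl x⟩
          · exact Or.inr (Or.inr (Or.inr ⟨hPQ x hx, hPQ x hx, ε.refl x⟩))
        · rw [h1, h2]
          exact Or.inr (Or.inl ⟨hz, hw, ε.refl z, ε.refl w⟩)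
        · rw [h1, h2]
          exact Or.inr (Or.inr (Or.inl ⟨hw, hz, ε.refl w, ε.refl z⟩))
    | refl x =>
      by_cases hx : x ∈ P
      · exact Or.inl ⟨hx, hx, ε.refl x⟩
      · exact Or.inr (Or.inr (Or.inr ⟨hPQ x hx, hPQ x hx, ε.refl x⟩))
    | symm x y _ ih =>
      rcases ih with ⟨h1, h2, h3⟩ | ⟨h1, h2, h3, h4⟩ | ⟨h1, h2, h3, h4⟩ | ⟨h1, h2, h3⟩
      · exact Or.inl ⟨h2, h1, ε.symm h3⟩
      · exact Or.inr (Or.inr (Or.inl ⟨h2, h1, ε.symm h4, ε.symm h3⟩))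
      · exact Or.inr (Or.inl ⟨h2, h1, ε.symm h4, ε.symm h3⟩)
      · exact Or.inr (Or.inr (Or.inr ⟨h2, h1, ε.symm h3⟩))
    | trans x y u _ _ ih1 ih2 =>
      rcases ih1 with ⟨a1, a2, a3⟩ | ⟨a1, a2, a3, a4⟩ | ⟨a1, a2, a3, a4⟩ | ⟨a1, a2, a3⟩ <;>
      rcases ih2 with ⟨b1, b2, b3⟩ | ⟨b1, b2, b3, b4⟩ | ⟨b1, b2, b3, b4⟩ | ⟨b1, b2, b3⟩ <;>
      first
        | exact Or.inl ⟨a1, b2, ε.trans a3 b3⟩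
        | exact Or.inr (Or.inl ⟨a1, b2, ε.trans a3 b3, b4⟩)
        | exact Or.inr (Or.inl ⟨a1, b2, a3, ε.trans a4 b3⟩)
        | exact Or.inl ⟨a1, b2, ε.trans a3 b4⟩
        | exact Or.inr (Or.inr (Or.inr ⟨a1, b2, ε.trans a3 b4⟩))
        | exact Or.inr (Or.inr (Or.inl ⟨a1, b2, ε.trans a3 b3, b4⟩))
        | exact Or.inr (Or.inr (Or.inl ⟨a1, b2, a3, ε.trans a4 b3⟩))
        | exact Or.inr (Or.inr (Or.inr ⟨a1, b2, ε.trans a3 b3⟩))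
        | exact absurd b1 (hnot y a2)
        | exact absurd a2 (hnot y b1)
        | exact Or.inl ⟨a1, b2, ε.trans a3 (ε.trans (ε.symm b3) b4)⟩
        | exact Or.inr (Or.inr (Or.inr ⟨a1, b2, ε.trans a3 (ε.trans (ε.symm b3) b4)⟩))
        | exact Or.inl ⟨a1, b2, ε.trans (ε.trans a3 (ε.symm a4)) b3⟩
        | exact Or.inr (Or.inr (Or.inr ⟨a1, b2, ε.trans (ε.trans a3 (ε.symm a4)) b3⟩))
  rcases key with ⟨_, h2, _⟩ | ⟨_, _, h3, h4⟩ | ⟨h1, _, _⟩ | ⟨h1, _, _⟩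
  · exact absurd hq (hnot q h2)
  · exact ⟨h3, h4⟩
  · exact absurd h1 (hnot p hp)
  · exact absurd h1 (hnot p hp)
end
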